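/- arXiv:0901.2062 — 10 statements merged into one kernel-verified Lean document; each statement's English description precedes it below -/
import Mathlib

section
/- Let m ≥ 1 and let C be an F₂-linear subspace of (Fin (2^m) → ZMod 2) of dimension m+1 such that every nonzero element of C has Hamming weight at least 2^(m-1). Then the all-one vector belongs to C, and every element of C other than the zero vector and the all-one vector has Hamming weight exactly 2^(m-1); consequently C has weight enumerator 1 + 2(2^m − 1)·t^(2^(m-1)) + t^(2^m), i.e. exactly one codeword of weight 0, exactly 2(2^m−1) codewords of weight 2^(m-1), and exactly one codeword of weight 2^m. -/
/-!
Double counting by coordinates: in a binary linear code, a coordinate that does not vanish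
identically is nonzero on exactly half of the codewords, so twice the total weight is
`|D| · s`, where `s` is the number of such coordinates; with the minimum distance `w` this gives
the Plotkin bound `2 (|D| - 1) w ≤ |D| s`, with equality only if all nonzero words have weight `w`.

A code of length `2d` with `4d` words and minimum distance `d` is therefore nonzero on every
coordinate. Shortening it at a coordinate leaves `2d` words on `2d - 1` coordinates, which meets
the Plotkin bound with equality, so every nonzero codeword with a zero coordinate, i.e. every
codeword other than `0` and `1`, has weight exactly `d`. If `1` were not a codeword, all `4d - 1`
nonzero words would have weight `d`, and the total weight `(4d - 1) d` would differ from
`4d · 2d / 2`.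
-/

open Finset

theorem ZMod.ne_zero_iff_eq_one_mod_two {a : ZMod 2} : a ≠ 0 ↔ a = 1 := by
  revert a; decide

theorem AddMonoidHom.two_mul_card_apply_ne_zero {G : Type*} [AddGroup G] [Fintype G]
    (f : G →+ ZMod 2) (hf : f ≠ 0) : 2 * #{g | f g ≠ 0} = Fintype.card G := by
  obtain ⟨g₁, hg₁⟩ : ∃ g, f g ≠ 0 := by
    by_contra! h
    exact hf (AddMonoidHom.ext h)
  have hfiber : #{g | f g = 0} = #{g | f g ≠ 0} := by
    simp only [ZMod.ne_zero_iff_eq_one_mod_two, ← ZMod.ne_zero_iff_eq_one_mod_two.1 hg₁]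
    exact AddMonoidHom.card_fiber_eq_of_mem_range f ⟨0, map_zero f⟩ ⟨g₁, rfl⟩
  rw [two_mul]
  nth_rw 1 [← hfiber]
  exact card_filter_add_card_filter_not _

theorem sum_hammingNorm_eq_sum_card_filter {α ι : Type*} [Fintype ι] {β : ι → Type*}
    [∀ i, Zero (β i)] [∀ i, DecidableEq (β i)] (s : Finset α) (v : α → ∀ i, β i) :
    ∑ a ∈ s, hammingNorm (v a) = ∑ i, #{a ∈ s | v a i ≠ 0} := by
  simp only [hammingNorm, card_filter]
  exact sum_comm

namespace BinaryCode

theorem eq_one_of_forall_ne_zero {ι : Type*} {x : ι → ZMod 2} (hx : ∀ i, x i ≠ 0) : x = 1 :=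
  funext fun i => ZMod.ne_zero_iff_eq_one_mod_two.1 (hx i)

theorem hammingNorm_eq_card_iff {ι : Type*} [Fintype ι] {x : ι → ZMod 2} :
    hammingNorm x = Fintype.card ι ↔ x = 1 := by
  rw [hammingNorm, card_eq_iff_eq_univ, filter_eq_self]
  exact ⟨fun hx => eq_one_of_forall_ne_zero fun i => hx i (mem_univ i),
    fun hx i _ => by simp [hx]⟩

section Support

variable {ι : Type*} [Fintype ι] (D : Submodule (ZMod 2) (ι → ZMod 2))

open Classical in
noncomputable def codeSupport : Finset ι := {i | ∃ x ∈ D, x i ≠ 0}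

variable {D}

theorem mem_codeSupport {i : ι} : i ∈ codeSupport D ↔ ∃ x ∈ D, x i ≠ 0 := by
  simp [codeSupport]

theorem two_mul_card_apply_ne_zero [Fintype D] {i : ι} (hi : i ∈ codeSupport D) :
    2 * #{x : D | (x : ι → ZMod 2) i ≠ 0} = Fintype.card D := by
  let f : D →+ ZMod 2 := (LinearMap.proj i ∘ₗ D.subtype).toAddMonoidHom
  refine f.two_mul_card_apply_ne_zero fun hf => ?_
  obtain ⟨x, hxD, hxi⟩ := mem_codeSupport.1 hi
  exact hxi (DFunLike.congr_fun hf ⟨x, hxD⟩)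

variable (D) in
theorem two_mul_sum_hammingNorm [Fintype D] :
    2 * ∑ x : D, hammingNorm (x : ι → ZMod 2) = Fintype.card D * #(codeSupport D) := by
  rw [sum_hammingNorm_eq_sum_card_filter, mul_sum, ← sum_subset (subset_univ (codeSupport D))]
  · rw [sum_congr rfl fun i hi => two_mul_card_apply_ne_zero hi, sum_const, smul_eq_mul, mul_comm]
  · intro i _ hi
    simp only [mem_codeSupport, not_exists, not_and, not_not] at hi
    simp [hi]

theorem two_mul_natCard_inf_ker_proj {i : ι} (hi : i ∈ codeSupport D) :
    2 * Nat.card ↥(D ⊓ LinearMap.ker (LinearMap.proj i)) = Nat.card D := by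
  have := Fintype.ofFinite D
  have hcard : Nat.card ↥(D ⊓ LinearMap.ker (LinearMap.proj i)) =
      #{x : D | (x : ι → ZMod 2) i = 0} := by
    rw [← Fintype.card_subtype, ← Nat.card_eq_fintype_card]
    exact Nat.card_congr (Equiv.subtypeSubtypeEquivSubtypeInter (· ∈ D) (fun x => x i = 0)).symm
  have hsplit := card_filter_add_card_filter_not (s := univ) fun x : D => (x : ι → ZMod 2) i = 0
  rw [card_univ] at hsplit
  have hhalf := two_mul_card_apply_ne_zero hi
  simp only [ne_eq] at hhalf
  rw [hcard, Nat.card_eq_fintype_card (α := D)]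
  omega

end Support

section Plotkin

variable {ι : Type*} [Fintype ι] {D : Submodule (ZMod 2) (ι → ZMod 2)} {w : ℕ}

theorem sum_hammingNorm_eq_sum_erase_zero [Fintype D] :
    ∑ x : D, hammingNorm (x : ι → ZMod 2) =
      ∑ x ∈ (univ : Finset D).erase 0, hammingNorm (x : ι → ZMod 2) :=
  (sum_erase _ (by simp)).symm

theorem card_sub_one_mul_le_sum_hammingNorm [Fintype D]
    (hmin : ∀ x ∈ D, x ≠ 0 → w ≤ hammingNorm x) :
    (Fintype.card D - 1) * w ≤ ∑ x : D, hammingNorm (x : ι → ZMod 2) := by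
  rw [sum_hammingNorm_eq_sum_erase_zero, ← card_univ, ← card_erase_of_mem (mem_univ 0),
    ← smul_eq_mul]
  refine card_nsmul_le_sum _ _ _ fun x hx => hmin x x.2 ?_
  simpa using ne_of_mem_erase hx

theorem hammingNorm_eq_of_sum_hammingNorm_le [Fintype D]
    (hmin : ∀ x ∈ D, x ≠ 0 → w ≤ hammingNorm x)
    (hsum : ∑ x : D, hammingNorm (x : ι → ZMod 2) ≤ (Fintype.card D - 1) * w) :
    ∀ x ∈ D, x ≠ 0 → hammingNorm x = w := by
  have hsum_eq : ∑ _x ∈ (univ : Finset D).erase 0, w =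
      ∑ x ∈ (univ : Finset D).erase 0, hammingNorm (x : ι → ZMod 2) := by
    rw [← sum_hammingNorm_eq_sum_erase_zero, sum_const, card_erase_of_mem (mem_univ 0), card_univ,
      smul_eq_mul]
    exact le_antisymm (card_sub_one_mul_le_sum_hammingNorm hmin) hsum
  intro x hxD hx
  have hle : ∀ y ∈ (univ : Finset D).erase 0, w ≤ hammingNorm (y : ι → ZMod 2) :=
    fun y hy => hmin y y.2 (by simpa using ne_of_mem_erase hy)
  refine ((sum_eq_sum_iff_of_le hle).1 hsum_eq ⟨x, hxD⟩ ?_).symm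
  exact mem_erase.2 ⟨by simpa using hx, mem_univ _⟩

theorem plotkin_bound (hmin : ∀ x ∈ D, x ≠ 0 → w ≤ hammingNorm x) :
    2 * ((Nat.card D - 1) * w) ≤ Nat.card D * #(codeSupport D) := by
  have := Fintype.ofFinite D
  rw [Nat.card_eq_fintype_card, ← two_mul_sum_hammingNorm]
  exact Nat.mul_le_mul_left 2 (card_sub_one_mul_le_sum_hammingNorm hmin)

theorem hammingNorm_eq_of_card_mul_card_codeSupport_le
    (hmin : ∀ x ∈ D, x ≠ 0 → w ≤ hammingNorm x)
    (hle : Nat.card D * #(codeSupport D) ≤ 2 * ((Nat.card D - 1) * w)) :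
    ∀ x ∈ D, x ≠ 0 → hammingNorm x = w := by
  have := Fintype.ofFinite D
  rw [Nat.card_eq_fintype_card, ← two_mul_sum_hammingNorm] at hle
  exact hammingNorm_eq_of_sum_hammingNorm_le hmin (Nat.le_of_mul_le_mul_left hle two_pos)

theorem card_mul_card_codeSupport_of_hammingNorm_eq
    (hw : ∀ x ∈ D, x ≠ 0 → hammingNorm x = w) :
    Nat.card D * #(codeSupport D) = 2 * ((Nat.card D - 1) * w) := by
  have := Fintype.ofFinite D
  rw [Nat.card_eq_fintype_card, ← two_mul_sum_hammingNorm, sum_hammingNorm_eq_sum_erase_zero,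
    sum_congr rfl fun x hx => hw _ x.2 (by simpa using ne_of_mem_erase hx), sum_const,
    card_erase_of_mem (mem_univ 0), card_univ, smul_eq_mul]

end Plotkin

section PlotkinExtremal

variable {ι : Type*} [Fintype ι] {d : ℕ} {C : Submodule (ZMod 2) (ι → ZMod 2)}

theorem codeSupport_eq_univ_of_extremal (hι : Fintype.card ι = 2 * d) (hC : Nat.card C = 4 * d)
    (hmin : ∀ x ∈ C, x ≠ 0 → d ≤ hammingNorm x) : codeSupport C = univ := by
  rw [eq_univ_iff_forall]
  intro i
  by_contra hi
  have hsupp : #(codeSupport C) < 2 * d := hι ▸ card_lt_univ_of_notMem hi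
  have hd : 0 < d := by have := Nat.card_pos (α := C); omega
  have hplotkin := plotkin_bound hmin
  rw [hC] at hplotkin
  zify [show 1 ≤ 4 * d by omega] at hplotkin
  nlinarith

theorem hammingNorm_eq_of_apply_eq_zero_of_extremal (hι : Fintype.card ι = 2 * d)
    (hC : Nat.card C = 4 * d) (hmin : ∀ x ∈ C, x ≠ 0 → d ≤ hammingNorm x) {x : ι → ZMod 2}
    (hxC : x ∈ C) (hx : x ≠ 0) {i : ι} (hxi : x i = 0) : hammingNorm x = d := by
  set D := C ⊓ LinearMap.ker (LinearMap.proj i)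
  have hD : Nat.card D = 2 * d := by
    have : 2 * Nat.card D = Nat.card C :=
      two_mul_natCard_inf_ker_proj (codeSupport_eq_univ_of_extremal hι hC hmin ▸ mem_univ i)
    omega
  have hsupp : #(codeSupport D) ≤ 2 * d - 1 := by
    have hi : i ∉ codeSupport D := by
      simp only [mem_codeSupport, not_exists, not_and, not_not]
      exact fun y hy => hy.2
    have := hι ▸ card_lt_univ_of_notMem hi
    omega
  refine hammingNorm_eq_of_card_mul_card_codeSupport_le
    (fun y hy => hmin y (Submodule.mem_inf.1 hy).1) ?_ x
    (Submodule.mem_inf.2 ⟨hxC, (LinearMap.mem_ker (f := LinearMap.proj i)).2 hxi⟩) hx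
  calc Nat.card D * #(codeSupport D) ≤ 2 * d * (2 * d - 1) := by
        rw [hD]; exact Nat.mul_le_mul_left _ hsupp
    _ = 2 * ((Nat.card D - 1) * d) := by rw [hD]; ring

theorem hammingNorm_eq_of_extremal (hι : Fintype.card ι = 2 * d) (hC : Nat.card C = 4 * d)
    (hmin : ∀ x ∈ C, x ≠ 0 → d ≤ hammingNorm x) {x : ι → ZMod 2} (hxC : x ∈ C) (hx0 : x ≠ 0)
    (hx1 : x ≠ 1) : hammingNorm x = d := by
  obtain ⟨i, hi⟩ : ∃ i, x i = 0 := by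
    by_contra! h
    exact hx1 (eq_one_of_forall_ne_zero h)
  exact hammingNorm_eq_of_apply_eq_zero_of_extremal hι hC hmin hxC hx0 hi

theorem one_mem_of_extremal (hι : Fintype.card ι = 2 * d) (hC : Nat.card C = 4 * d)
    (hmin : ∀ x ∈ C, x ≠ 0 → d ≤ hammingNorm x) : (1 : ι → ZMod 2) ∈ C := by
  by_contra h1
  have hw : ∀ x ∈ C, x ≠ 0 → hammingNorm x = d := fun x hxC hx0 =>
    hammingNorm_eq_of_extremal hι hC hmin hxC hx0 fun hx1 => h1 (hx1 ▸ hxC)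
  have htotal := card_mul_card_codeSupport_of_hammingNorm_eq hw
  rw [hC, codeSupport_eq_univ_of_extremal hι hC hmin, card_univ, hι] at htotal
  have hd : 0 < d := by have := Nat.card_pos (α := C); omega
  zify [show 1 ≤ 4 * d by omega] at htotal
  nlinarith

theorem ncard_hammingNorm_eq_of_extremal (hι : Fintype.card ι = 2 * d) (hC : Nat.card C = 4 * d)
    (hmin : ∀ x ∈ C, x ≠ 0 → d ≤ hammingNorm x) :
    {x | x ∈ C ∧ hammingNorm x = d}.ncard = 2 * (2 * d - 1) := by
  have hd : 0 < d := by have := Nat.card_pos (α := C); omega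
  have : Nonempty ι := Fintype.card_pos_iff.1 (by omega)
  have hset : {x | x ∈ C ∧ hammingNorm x = d} = (C : Set (ι → ZMod 2)) \ {0, 1} := by
    ext x
    simp only [Set.mem_ofPred_eq, Set.mem_sdiff, SetLike.mem_coe, Set.mem_insert_iff,
      Set.mem_singleton_iff, not_or]
    refine ⟨fun ⟨hxC, hx⟩ => ⟨hxC, ?_, ?_⟩, fun ⟨hxC, hx0, hx1⟩ =>
      ⟨hxC, hammingNorm_eq_of_extremal hι hC hmin hxC hx0 hx1⟩⟩
    · rintro rfl
      rw [hammingNorm_zero] at hx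
      omega
    · rintro rfl
      rw [hammingNorm_eq_card_iff.2 rfl] at hx
      omega
  rw [hset, Set.ncard_sdiff, Set.ncard_pair zero_ne_one, ← Nat.card_coe_set_eq,
    SetLike.coe_sort_coe, hC]
  · omega
  · simp [Set.insert_subset_iff, C.zero_mem, one_mem_of_extremal hι hC hmin]

end PlotkinExtremal

theorem ncard_hammingNorm_eq_zero {ι : Type*} [Fintype ι] (C : Submodule (ZMod 2) (ι → ZMod 2)) :
    {x | x ∈ C ∧ hammingNorm x = 0}.ncard = 1 :=
  Set.ncard_eq_one.2 ⟨0, Set.ext fun _ =>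
    ⟨fun hx => hammingNorm_eq_zero.1 hx.2, by rintro rfl; exact ⟨C.zero_mem, hammingNorm_zero⟩⟩⟩

theorem ncard_hammingNorm_eq_card {ι : Type*} [Fintype ι] {C : Submodule (ZMod 2) (ι → ZMod 2)}
    (h1 : (1 : ι → ZMod 2) ∈ C) : {x | x ∈ C ∧ hammingNorm x = Fintype.card ι}.ncard = 1 :=
  Set.ncard_eq_one.2 ⟨1, Set.ext fun _ =>
    ⟨fun hx => hammingNorm_eq_card_iff.1 hx.2,
      by rintro rfl; exact ⟨h1, hammingNorm_eq_card_iff.2 rfl⟩⟩⟩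

end BinaryCode

open BinaryCode in
theorem first_order_RM_weight_distribution
    (m : ℕ) (hm : 1 ≤ m)
    (C : Submodule (ZMod 2) (Fin (2 ^ m) → ZMod 2))
    (hdim : Module.finrank (ZMod 2) C = m + 1)
    (hmin : ∀ x ∈ C, x ≠ 0 → 2 ^ (m - 1) ≤ hammingNorm x) :
    (fun _ => (1 : ZMod 2)) ∈ C ∧
    (∀ x ∈ C, x ≠ 0 → x ≠ (fun _ => (1 : ZMod 2)) →
      hammingNorm x = 2 ^ (m - 1)) ∧
    {x : Fin (2 ^ m) → ZMod 2 | x ∈ C ∧ hammingNorm x = 0}.ncard = 1 ∧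
    {x : Fin (2 ^ m) → ZMod 2 | x ∈ C ∧ hammingNorm x = 2 ^ (m - 1)}.ncard
      = 2 * (2 ^ m - 1) ∧
    {x : Fin (2 ^ m) → ZMod 2 | x ∈ C ∧ hammingNorm x = 2 ^ m}.ncard = 1 := by
  have hn : 2 ^ m = 2 * 2 ^ (m - 1) := by rw [← pow_succ']; congr 1; omega
  have hι : Fintype.card (Fin (2 ^ m)) = 2 * 2 ^ (m - 1) := by rw [Fintype.card_fin, hn]
  have hC : Nat.card C = 4 * 2 ^ (m - 1) := by
    rw [Module.natCard_eq_pow_finrank (K := ZMod 2), hdim, Nat.card_zmod, pow_succ, hn]; ring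
  have h1 := one_mem_of_extremal hι hC hmin
  refine ⟨h1, fun x hxC hx0 hx1 => hammingNorm_eq_of_extremal hι hC hmin hxC hx0 hx1,
    ncard_hammingNorm_eq_zero C, ?_, by simpa using ncard_hammingNorm_eq_card h1⟩
  rw [ncard_hammingNorm_eq_of_extremal hι hC hmin, hn]
end

section
/- Let m ≥ 1 and let V = (Fin m → ZMod 2), so |V| = 2^m. Let C be an F₂-linear subspace of (V → ZMod 2) of dimension m+1 such that every nonzero element of C has Hamming weight at least 2^(m-1). Then there exists a permutation σ of V such that C = { f ∘ σ : f ∈ R(1,m) }, where R(1,m) is the first-order Reed–Muller code, i.e. the F₂-subspace of (V → ZMod 2) spanned by the constant function 1 together with the m coordinate functions v ↦ v i (for i : Fin m). In other words, every binary linear [2^m, m+1, 2^(m-1)] code is equivalent (up to coordinate permutation) to the first-order Reed–Muller code. -/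
/-- The first-order Reed–Muller code `R(1,m)`: the `F₂`-subspace of Boolean
functions on `V = Fin m → ZMod 2` spanned by the constant function `1`
together with the coordinate functions `v ↦ v i`. -/
def ReedMuller1 (m : ℕ) : Submodule (ZMod 2) ((Fin m → ZMod 2) → ZMod 2) :=
  Submodule.span (ZMod 2)
    ({fun _ => (1 : ZMod 2)} ∪
      Set.range (fun i : Fin m => fun v : Fin m → ZMod 2 => v i))

/-!
Write `bias f = ∑ₓ (-1) ^ f x = n - 2 wt f`, where `n = |V|`. Orthogonality of the characters
`f ↦ (-1) ^ f x` of `C` evaluates the first two moments of the bias over `C`: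
`∑_{f ∈ C} bias f ≥ 0` and `∑_{f ∈ C} (bias f)² = |C| P`, where `P ≥ n` counts the pairs `(x, y)`
that no codeword separates. The weight bound puts `bias f` in `[-n, 0]` for `f ≠ 0`, so
`bias f (bias f + n) ≤ 0`; summing over `C`, where the zero word contributes `2n²`, gives
`2n P + n ∑ bias ≤ 2n²`. Everything is therefore tight: `P = n`, so `C` separates points, and
`∑ bias = 0` forces a codeword of bias `-n`, which is the constant `1`. Completing `1` by
`g₁, …, g_m` to a basis of `C`, the map `x ↦ (gᵢ x)ᵢ` is a bijection of `V` that carries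
`R(1,m)` onto `C`.
-/

open Finset

def signChar : AddChar (ZMod 2) ℤ := AddChar.zmodChar 2 (by norm_num : (-1 : ℤ) ^ 2 = 1)

@[simp] lemma signChar_zero : signChar 0 = 1 := AddChar.map_zero_eq_one _

lemma signChar_eq_one_iff (x : ZMod 2) : signChar x = 1 ↔ x = 0 := by
  revert x; decide

open scoped Classical in
lemma sum_signChar_eq_ite {G : Type*} [AddGroup G] [Fintype G] (φ : G →+ ZMod 2) :
    ∑ g, signChar (φ g) = if φ = 0 then (Fintype.card G : ℤ) else 0 := by
  have hφ : signChar.compAddMonoidHom φ = 0 ↔ φ = 0 := by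
    simp [signChar_eq_one_iff, DFunLike.ext_iff]
  calc ∑ g, signChar (φ g) = ∑ g, signChar.compAddMonoidHom φ g := rfl
    _ = _ := by simp only [AddChar.sum_eq_ite, hφ]

section Finite

variable {X : Type*} [Fintype X]

section Reflexive

variable {r : X → X → Prop} [DecidableRel r]

lemma diag_subset_filter_of_refl (hr : ∀ x, r x x) :
    (univ : Finset X).diag ⊆ univ.filter (fun p : X × X => r p.1 p.2) := fun p hp => by
  rw [mem_diag] at hp
  simp [← hp.2, hr]

lemma card_le_card_filter_of_refl (hr : ∀ x, r x x) :
    Fintype.card X ≤ #{p : X × X | r p.1 p.2} := by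
  simpa using card_le_card (diag_subset_filter_of_refl hr)

lemma eq_of_card_filter_le_of_refl (hr : ∀ x, r x x)
    (hcard : #{p : X × X | r p.1 p.2} ≤ Fintype.card X) {x y : X} (hxy : r x y) : x = y := by
  have hdiag := eq_of_subset_of_card_le (diag_subset_filter_of_refl hr) (by simpa using hcard)
  have hmem : (x, y) ∈ (univ : Finset X).diag := by rw [hdiag]; simpa using hxy
  exact (mem_diag.mp hmem).2

end Reflexive


def bias (f : X → ZMod 2) : ℤ := ∑ x, signChar (f x)

@[simp] lemma bias_zero : bias (0 : X → ZMod 2) = Fintype.card X := by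
  simp [bias]

lemma bias_eq_card_sub_two_mul_hammingNorm (f : X → ZMod 2) :
    bias f = Fintype.card X - 2 * hammingNorm f := by
  rw [bias, hammingNorm, card_filter, ← card_univ, card_eq_sum_ones]
  push_cast
  rw [mul_sum, ← sum_sub_distrib]
  refine sum_congr rfl fun x _ => ?_
  generalize f x = y
  revert y; decide

lemma neg_card_le_bias (f : X → ZMod 2) : -(Fintype.card X : ℤ) ≤ bias f := by
  rw [bias_eq_card_sub_two_mul_hammingNorm]
  have := hammingNorm_le_card_fintype (x := f)
  omega

lemma eq_one_of_bias_eq_neg_card {f : X → ZMod 2} (hf : bias f = -Fintype.card X) : f = 1 := by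
  rw [bias_eq_card_sub_two_mul_hammingNorm] at hf
  have hwt : #{x | f x ≠ 0} = #(univ : Finset X) := by
    rw [card_univ, ← hammingNorm]; omega
  funext x
  have hfx := card_filter_eq_iff.mp hwt x (mem_univ x)
  rw [Pi.one_apply]
  revert hfx; generalize f x = y; revert y; decide

section Moments

variable (C : Submodule (ZMod 2) (X → ZMod 2)) [Fintype C]

lemma sum_bias_nonneg : 0 ≤ ∑ f : C, bias (f : X → ZMod 2) := by
  classical
  simp only [bias]
  rw [sum_comm]
  refine sum_nonneg fun x _ => ?_
  rw [show ∑ f : C, signChar ((f : X → ZMod 2) x) = _ from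
    sum_signChar_eq_ite (LinearMap.proj x ∘ₗ C.subtype).toAddMonoidHom]
  positivity

open scoped Classical in
lemma sum_bias_sq :
    ∑ f : C, bias (f : X → ZMod 2) ^ 2 =
      Fintype.card C * #{p : X × X | ∀ f ∈ C, f p.1 = f p.2} := by
  calc ∑ f : C, bias (f : X → ZMod 2) ^ 2
      = ∑ f : C, ∑ p : X × X, signChar ((f : X → ZMod 2) p.1 + (f : X → ZMod 2) p.2) := by
        refine sum_congr rfl fun f _ => ?_
        simp only [Fintype.sum_prod_type, bias, sq, sum_mul_sum, AddChar.map_add_eq_mul]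
    _ = ∑ p : X × X, ∑ f : C, signChar ((f : X → ZMod 2) p.1 + (f : X → ZMod 2) p.2) := sum_comm
    _ = _ := by
      rw [card_filter, Nat.cast_sum, mul_sum]
      refine sum_congr rfl fun p _ => ?_
      refine (sum_signChar_eq_ite ((LinearMap.proj (R := ZMod 2) (φ := fun _ : X => ZMod 2) p.1 +
          LinearMap.proj p.2) ∘ₗ C.subtype).toAddMonoidHom).trans ?_
      simp [DFunLike.ext_iff, CharTwo.add_eq_zero]

end Moments


section PlotkinEquality

variable {C : Submodule (ZMod 2) (X → ZMod 2)} [Fintype C]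

lemma bias_nonpos_of_le_two_mul_hammingNorm {f : X → ZMod 2}
    (hf : Fintype.card X ≤ 2 * hammingNorm f) : bias f ≤ 0 := by
  rw [bias_eq_card_sub_two_mul_hammingNorm]
  omega

open scoped Classical in
lemma plotkin_equality_case (hcard : Fintype.card C = 2 * Fintype.card X)
    (hmin : ∀ f ∈ C, f ≠ 0 → Fintype.card X ≤ 2 * hammingNorm f) :
    #{p : X × X | ∀ f ∈ C, f p.1 = f p.2} = Fintype.card X ∧
      ∑ f : C, bias (f : X → ZMod 2) = 0 ∧
      ∀ f : C, f ≠ 0 → bias (f : X → ZMod 2) * (bias (f : X → ZMod 2) + Fintype.card X) = 0 := by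
  have hn : 0 < Fintype.card X := by
    have := Fintype.card_pos (α := C)
    omega
  have hP : Fintype.card X ≤ #{p : X × X | ∀ f ∈ C, f p.1 = f p.2} :=
    card_le_card_filter_of_refl (r := fun x y => ∀ f ∈ C, f x = f y) fun x f _ => rfl
  have hB := sum_bias_nonneg C
  have hterm : ∀ f ∈ univ.erase (0 : C),
      bias (f : X → ZMod 2) * (bias (f : X → ZMod 2) + Fintype.card X) ≤ 0 := fun f hf =>
    mul_nonpos_of_nonpos_of_nonneg
      (bias_nonpos_of_le_two_mul_hammingNorm (hmin f f.2 (by simpa using ne_of_mem_erase hf)))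
      (by linarith [neg_card_le_bias (f : X → ZMod 2)])
  have hS := sum_nonpos hterm
  have hsum : ∑ f : C, bias (f : X → ZMod 2) * (bias (f : X → ZMod 2) + Fintype.card X) =
      2 * Fintype.card X * #{p : X × X | ∀ f ∈ C, f p.1 = f p.2} +
        Fintype.card X * ∑ f : C, bias (f : X → ZMod 2) := by
    simp only [mul_add, sum_add_distrib, ← sq, sum_bias_sq, ← sum_mul, hcard]
    push_cast
    ring
  rw [← add_sum_erase _ _ (mem_univ 0), ZeroMemClass.coe_zero, bias_zero] at hsum
  have hslack : 2 * (#{p : X × X | ∀ f ∈ C, f p.1 = f p.2} - Fintype.card X : ℤ) +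
      ∑ f : C, bias (f : X → ZMod 2) ≤ 0 :=
    nonpos_of_mul_nonpos_right (a := (Fintype.card X : ℤ)) (by linarith) (by exact_mod_cast hn)
  have hPeq : #{p : X × X | ∀ f ∈ C, f p.1 = f p.2} = Fintype.card X := by omega
  have hB0 : ∑ f : C, bias (f : X → ZMod 2) = 0 := by omega
  rw [hPeq, hB0] at hsum
  have hS0 : ∑ f ∈ univ.erase (0 : C),
      bias (f : X → ZMod 2) * (bias (f : X → ZMod 2) + Fintype.card X) = 0 := by
    linarith
  exact ⟨hPeq, hB0, fun f hf =>
    (sum_eq_zero_iff_of_nonpos hterm).mp hS0 f (mem_erase.mpr ⟨hf, mem_univ f⟩)⟩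

lemma eq_of_forall_mem_apply_eq (hcard : Fintype.card C = 2 * Fintype.card X)
    (hmin : ∀ f ∈ C, f ≠ 0 → Fintype.card X ≤ 2 * hammingNorm f) {x y : X}
    (hxy : ∀ f ∈ C, f x = f y) : x = y := by
  classical
  exact eq_of_card_filter_le_of_refl (r := fun x y => ∀ f ∈ C, f x = f y) (fun x f _ => rfl)
    (plotkin_equality_case hcard hmin).1.le hxy

lemma one_mem_of_card_eq (hcard : Fintype.card C = 2 * Fintype.card X)
    (hmin : ∀ f ∈ C, f ≠ 0 → Fintype.card X ≤ 2 * hammingNorm f) : (1 : X → ZMod 2) ∈ C := by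
  obtain ⟨-, hB, hterm⟩ := plotkin_equality_case hcard hmin
  rw [← add_sum_erase _ _ (mem_univ 0), ZeroMemClass.coe_zero, bias_zero] at hB
  obtain ⟨f, hf, hbias⟩ : ∃ f ∈ univ.erase (0 : C), bias (f : X → ZMod 2) ≠ 0 := by
    by_contra! h
    have hn := Fintype.card_pos (α := C)
    rw [sum_eq_zero h] at hB
    omega
  have hf1 : (f : X → ZMod 2) = 1 := by
    have hbias' := (mul_eq_zero.mp (hterm f (ne_of_mem_erase hf))).resolve_left hbias
    exact eq_one_of_bias_eq_neg_card (by linarith)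
  exact hf1 ▸ f.2

end PlotkinEquality

end Finite

lemma forall_mem_span_apply_eq {X R : Type*} [Semiring R] {S : Set (X → R)} {x y : X}
    (h : ∀ f ∈ S, f x = f y) : ∀ f ∈ Submodule.span R S, f x = f y := fun _ hf =>
  Submodule.span_le (p := LinearMap.eqLocus (LinearMap.proj (R := R) (φ := fun _ : X => R) x)
    (LinearMap.proj y)) |>.mpr h hf

lemma Submodule.exists_span_insert_range_eq {K M : Type*} [Field K] [AddCommGroup M]
    [Module K M] {C : Submodule K M} {v : M} (hv : v ∈ C) (hv0 : v ≠ 0) {m : ℕ}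
    (hdim : Module.finrank K C = m + 1) :
    ∃ g : Fin m → M, Submodule.span K (insert v (Set.range g)) = C := by
  have : FiniteDimensional K C := Module.finite_of_finrank_pos (by omega)
  obtain ⟨W, hdisj, hsup⟩ : ∃ W : Submodule K M, Disjoint (K ∙ v) W ∧ (K ∙ v) ⊔ W = C :=
    IsModularLattice.exists_disjoint_and_sup_eq ((Submodule.span_singleton_le_iff_mem v C).mpr hv)
  have : FiniteDimensional K W := Submodule.finiteDimensional_of_le (hsup ▸ le_sup_right : W ≤ C)
  have hWdim : Module.finrank K W = m := by
    have := Submodule.finrank_sup_add_finrank_inf_eq (K ∙ v) W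
    rw [hsup, hdisj.eq_bot, finrank_bot, finrank_span_singleton hv0, hdim] at this
    omega
  let b := Module.finBasisOfFinrankEq K W hWdim
  refine ⟨fun i => b i, ?_⟩
  rw [Submodule.span_insert, (span_range_subtype_eq_top_iff W fun i => (b i).2).mp b.span_eq, hsup]

lemma map_funLeft_reedMuller1 {X : Type*} {m : ℕ} (τ : X → Fin m → ZMod 2) :
    (ReedMuller1 m).map (LinearMap.funLeft (ZMod 2) (ZMod 2) τ) =
      Submodule.span (ZMod 2) (insert 1 (Set.range fun i x => τ x i)) := by
  rw [ReedMuller1, Submodule.map_span, Set.image_union, Set.image_singleton, ← Set.range_comp]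
  rfl

theorem first_order_RM_unique
    (m : ℕ) (hm : 1 ≤ m)
    (C : Submodule (ZMod 2) ((Fin m → ZMod 2) → ZMod 2))
    (hdim : Module.finrank (ZMod 2) C = m + 1)
    (hmin : ∀ f ∈ C, f ≠ 0 → 2 ^ (m - 1) ≤ hammingNorm f) :
    ∃ σ : Equiv.Perm (Fin m → ZMod 2),
      (C : Set ((Fin m → ZMod 2) → ZMod 2)) =
        (fun f => f ∘ σ) '' (ReedMuller1 m : Set ((Fin m → ZMod 2) → ZMod 2)) := by
  have := Fintype.ofFinite C
  have hcard : Fintype.card C = 2 * Fintype.card (Fin m → ZMod 2) := by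
    rw [Module.card_eq_pow_finrank (K := ZMod 2) (V := C), hdim]
    simp [pow_succ']
  have hmin' : ∀ f ∈ C, f ≠ 0 → Fintype.card (Fin m → ZMod 2) ≤ 2 * hammingNorm f := by
    intro f hf hf0
    have h2m : 2 ^ m = 2 * 2 ^ (m - 1) := by rw [← pow_succ']; congr; omega
    simpa [h2m] using hmin f hf hf0
  obtain ⟨g, hg⟩ :=
    Submodule.exists_span_insert_range_eq (one_mem_of_card_eq hcard hmin') one_ne_zero hdim
  have hbij : Function.Bijective fun v i => g i v := by
    refine Finite.injective_iff_bijective.mp fun v w hvw => ?_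
    refine eq_of_forall_mem_apply_eq hcard hmin' (hg ▸ forall_mem_span_apply_eq ?_)
    rintro _ (rfl | ⟨i, rfl⟩)
    exacts [rfl, congrFun hvw i]
  refine ⟨Equiv.ofBijective _ hbij, ?_⟩
  rw [← hg, ← map_funLeft_reedMuller1, Submodule.map_coe]
  rfl
end

section
/- Let m ≥ 1 and let C be an F₂-linear subspace of (Fin (2^m − 1) → ZMod 2) of dimension m such that every nonzero element of C has Hamming weight at least 2^(m-1). Then some nonzero element of C has Hamming weight exactly 2^(m-1); i.e. no binary linear code of length 2^m − 1 and dimension m has minimum distance greater than 2^(m-1). -/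
/-!
Plotkin's double counting. In a binary linear code `C`, each coordinate is either identically zero
on `C` or nonzero on exactly half of the codewords, so the total weight of `C` is at most
`n · |C| / 2`. If all `2^m - 1` nonzero codewords had weight at least `2^(m-1) + 1`, the total
weight would exceed `(2^m - 1) · 2^(m-1)`, which is that bound for `n = 2^m - 1`, `|C| = 2^m`.
-/

open Finset

theorem card_filter_ne_zero_mul_two_le {G : Type*} [AddGroup G] [Fintype G] (f : G →+ ZMod 2) :
    #{g | f g ≠ 0} * 2 ≤ Fintype.card G := by
  classical
  suffices h : #{g | f g ≠ 0} ≤ #{g | ¬f g ≠ 0} by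
    have := card_filter_add_card_filter_not (s := univ) (fun g => f g ≠ 0)
    rw [card_univ] at this
    omega
  by_cases h : ∃ g₀, f g₀ ≠ 0
  · obtain ⟨g₀, hg₀⟩ := h
    -- translating by `g₀` swaps the two fibres of `f`
    have hone : ∀ x : ZMod 2, x ≠ 0 → x = 1 := by decide
    refine card_le_card_of_injOn (· - g₀) (fun g hg => ?_) sub_left_injective.injOn
    simp only [coe_filter, mem_univ, true_and, Set.mem_ofPred_eq, not_not, map_sub] at hg ⊢
    rw [hone _ hg, hone _ hg₀, sub_self]
  · simp_all

theorem sum_hammingNorm_mul_two_le {ι : Type*} [Fintype ι]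
    (C : Submodule (ZMod 2) (ι → ZMod 2)) [Fintype C] :
    (∑ c : C, hammingNorm (c : ι → ZMod 2)) * 2 ≤ Fintype.card ι * Fintype.card C := by
  classical
  have hswap : ∑ c : C, hammingNorm (c : ι → ZMod 2) =
      ∑ i : ι, #{c : C | (c : ι → ZMod 2) i ≠ 0} := by
    simp only [hammingNorm, card_filter]
    exact sum_comm
  calc (∑ c : C, hammingNorm (c : ι → ZMod 2)) * 2
      = ∑ i : ι, #{c : C | (c : ι → ZMod 2) i ≠ 0} * 2 := by rw [hswap, sum_mul]
    _ ≤ ∑ _i : ι, Fintype.card C :=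
        sum_le_sum fun i _ =>
          card_filter_ne_zero_mul_two_le ((Pi.evalAddMonoidHom _ i).comp C.toAddSubgroup.subtype)
    _ = Fintype.card ι * Fintype.card C := by simp

theorem binary_plotkin_bound {ι : Type*} [Fintype ι]
    (C : Submodule (ZMod 2) (ι → ZMod 2)) [Fintype C] {d : ℕ}
    (hd : ∀ x ∈ C, x ≠ 0 → d ≤ hammingNorm x) :
    (Fintype.card C - 1) * d * 2 ≤ Fintype.card ι * Fintype.card C := by
  classical
  have hnonzero :
      (Fintype.card C - 1) * d ≤ ∑ c ∈ (univ : Finset C).erase 0, hammingNorm (c : ι → ZMod 2) := by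
    rw [← card_univ, ← card_erase_of_mem (mem_univ 0), ← smul_eq_mul]
    refine card_nsmul_le_sum _ _ _ fun c hc => hd c c.2 ?_
    simpa using ne_of_mem_erase hc
  calc (Fintype.card C - 1) * d * 2
      ≤ (∑ c : C, hammingNorm (c : ι → ZMod 2)) * 2 := by
        gcongr
        exact hnonzero.trans (sum_le_sum_of_subset (erase_subset _ _))
    _ ≤ Fintype.card ι * Fintype.card C := sum_hammingNorm_mul_two_le C

theorem simplex_length_dim_min_distance_attained
    (m : ℕ) (hm : 1 ≤ m)
    (C : Submodule (ZMod 2) (Fin (2 ^ m - 1) → ZMod 2))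
    (hdim : Module.finrank (ZMod 2) C = m)
    (hmin : ∀ x ∈ C, x ≠ 0 → 2 ^ (m - 1) ≤ hammingNorm x) :
    ∃ x ∈ C, x ≠ 0 ∧ hammingNorm x = 2 ^ (m - 1) := by
  by_contra! hnone
  have : Fintype C := Fintype.ofFinite C
  have hcard : Fintype.card C = 2 ^ m := by
    rw [Module.card_eq_pow_finrank (K := ZMod 2), hdim, ZMod.card]
  have hplotkin := binary_plotkin_bound C (d := 2 ^ (m - 1) + 1)
    fun x hx hx0 => (hmin x hx hx0).lt_of_ne (hnone x hx hx0).symm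
  rw [hcard, Fintype.card_fin] at hplotkin
  have hpow : 2 ^ m = 2 ^ (m - 1) * 2 := by rw [← pow_succ, Nat.sub_add_cancel hm]
  have hpos : 0 < 2 ^ m - 1 := Nat.sub_pos_of_lt (Nat.one_lt_two_pow_iff.mpr (by omega))
  rw [mul_assoc] at hplotkin
  have hcancel := Nat.le_of_mul_le_mul_left hplotkin hpos
  omega
end

section
/- Let m ≥ 1, let V = (Fin m → ZMod 2), and for u ∈ V let ℓ_u : V → ZMod 2 denote the linear Boolean function ℓ_u(v) = ∑ i, u i * v i. Let f : V → ZMod 2 be a Boolean function such that the Hamming distance from f to ℓ_u is at least 2^(m-1) for every u ∈ V. Then there exists exactly one ũ ∈ V such that the Hamming distance from f to ℓ_ũ equals 2^m (equivalently, f(v) = 1 + ℓ_ũ(v) for all v ∈ V), and for every u ≠ ũ the Hamming distance from f to ℓ_u equals exactly 2^(m-1). -/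
open Finset

private def eps : ZMod 2 → ℤ := fun x => 1 - 2 * x.val

private lemma eps_zero : eps 0 = 1 := by decide
private lemma eps_add : ∀ a b : ZMod 2, eps (a + b) = eps a * eps b := by decide
private lemma eps_add_one : ∀ a : ZMod 2, eps (a + 1) = - eps a := by decide
private lemma eps_ite : ∀ a b : ZMod 2, eps (a + b) = 1 - 2 * (if a ≠ b then (1:ℤ) else 0) := by decide
private lemma zmod2_ne_iff : ∀ a b : ZMod 2, a ≠ b ↔ a = 1 + b := by decide
private lemma zmod2_self : ∀ a : ZMod 2, a + a = 0 := by decide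
private lemma zmod2_cases : ∀ a : ZMod 2, a = 0 ∨ a = 1 := by decide
private lemma zmod2_add_eq_zero : ∀ a b : ZMod 2, a + b = 0 → b = a := by decide

private lemma sum_eps_pairing {m : ℕ} (v : Fin m → ZMod 2) :
    ∑ u : Fin m → ZMod 2, eps (∑ i, u i * v i) = if v = 0 then 2 ^ m else 0 := by
  split_ifs with hv
  · subst hv
    simp only [Pi.zero_apply, mul_zero, Finset.sum_const_zero, eps_zero, Finset.sum_const,
      nsmul_eq_mul, mul_one, Finset.card_univ]
    norm_num [Fintype.card_fun]
  · obtain ⟨i, hi⟩ : ∃ i, v i ≠ 0 := by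
      by_contra h; push_neg at h; exact hv (funext h)
    have hvi : v i = 1 := by rcases zmod2_cases (v i) with h | h <;> simp_all
    have key : ∀ u : Fin m → ZMod 2,
        ∑ j, (u + (Pi.single i 1 : Fin m → ZMod 2)) j * v j = (∑ j, u j * v j) + 1 := by
      intro u
      simp only [Pi.add_apply, add_mul]
      rw [Finset.sum_add_distrib]
      congr 1
      rw [Finset.sum_eq_single i]
      · simp [hvi]
      · intro b _ hb; simp [Pi.single_apply, hb]
      · simp
    refine Finset.sum_ninvolution
      (fun u : Fin m → ZMod 2 => u + (Pi.single i 1 : Fin m → ZMod 2)) ?_ ?_ ?_ ?_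
    · intro u
      rw [key u, eps_add_one]; ring
    · intro u _ h
      have := congrFun h i
      simp at this
    · intro u; exact Finset.mem_univ _
    · intro u
      funext j
      simp [add_assoc, zmod2_self]

theorem far_from_linear_functions_structure
    (m : ℕ) (hm : 1 ≤ m)
    (f : (Fin m → ZMod 2) → ZMod 2)
    (hfar : ∀ u : Fin m → ZMod 2,
      2 ^ (m - 1) ≤ hammingDist f (fun v => ∑ i, u i * v i)) :
    ∃! u₀ : Fin m → ZMod 2,
      hammingDist f (fun v => ∑ i, u₀ i * v i) = 2 ^ m ∧
      (∀ v, f v = 1 + ∑ i, u₀ i * v i) ∧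
      (∀ u : Fin m → ZMod 2, u ≠ u₀ →
        hammingDist f (fun v => ∑ i, u i * v i) = 2 ^ (m - 1)) := by
  set d : (Fin m → ZMod 2) → ℕ :=
    fun u => hammingDist f (fun v => ∑ i, u i * v i) with hd
  set W : (Fin m → ZMod 2) → ℤ :=
    fun u => ∑ v : Fin m → ZMod 2, eps (f v + ∑ i, u i * v i) with hWdef
  have hcardV : Fintype.card (Fin m → ZMod 2) = 2 ^ m := by
    simp [Fintype.card_fun]
  have hpow : (2:ℤ) * 2 ^ (m-1) = 2 ^ m := by
    rw [← pow_succ']; congr 1; omega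
  have hdist_card : ∀ u : Fin m → ZMod 2,
      d u = #({v | f v ≠ ∑ i, u i * v i} : Finset (Fin m → ZMod 2)) := by
    intro u; rfl
  -- W u = 2^m - 2 * d u
  have hW : ∀ u, W u = 2 ^ m - 2 * (d u : ℤ) := by
    intro u
    have h1 : W u = ∑ v : Fin m → ZMod 2,
        ((1:ℤ) - 2 * (if f v ≠ ∑ i, u i * v i then (1:ℤ) else 0)) :=
      Finset.sum_congr rfl fun v _ => eps_ite _ _
    rw [h1, Finset.sum_sub_distrib, ← Finset.mul_sum, Finset.sum_boole,
      Finset.sum_const, Finset.card_univ, hcardV, hdist_card u]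
    push_cast
    ring
  -- linearity in v
  have hlin : ∀ (u v w : Fin m → ZMod 2),
      (∑ i, u i * v i) + (∑ i, u i * w i) = ∑ i, u i * (v + w) i := by
    intro u v w
    rw [← Finset.sum_add_distrib]
    exact Finset.sum_congr rfl fun i _ => by simp [Pi.add_apply]; ring
  -- first moment
  have hsum : ∑ u : Fin m → ZMod 2, W u = 2 ^ m * eps (f 0) := by
    rw [hWdef]
    rw [Finset.sum_comm]
    have h2 : ∀ v : Fin m → ZMod 2, ∑ u : Fin m → ZMod 2, eps (f v + ∑ i, u i * v i)
        = eps (f v) * (if v = 0 then 2 ^ m else 0) := by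
      intro v
      rw [← sum_eps_pairing v, Finset.mul_sum]
      exact Finset.sum_congr rfl fun u _ => eps_add _ _
    simp_rw [h2, mul_ite, mul_zero]
    rw [Finset.sum_ite_eq' Finset.univ (0 : Fin m → ZMod 2)]
    simp [mul_comm]
  -- second moment
  have hsq : ∑ u : Fin m → ZMod 2, (W u) ^ 2 = 2 ^ m * 2 ^ m := by
    have expand : ∀ u : Fin m → ZMod 2, (W u) ^ 2
        = ∑ v : Fin m → ZMod 2, ∑ w : Fin m → ZMod 2,
          eps ((f v + f w) + ∑ i, u i * (v + w) i) := by
      intro u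
      rw [hWdef, sq, Finset.sum_mul_sum]
      refine Finset.sum_congr rfl fun v _ => Finset.sum_congr rfl fun w _ => ?_
      rw [← eps_add, ← hlin u v w]
      congr 1
      ring
    simp_rw [expand]
    rw [Finset.sum_comm]
    have inner : ∀ v : Fin m → ZMod 2, ∑ u : Fin m → ZMod 2, ∑ w : Fin m → ZMod 2,
        eps ((f v + f w) + ∑ i, u i * (v + w) i) = (2:ℤ) ^ m := by
      intro v
      rw [Finset.sum_comm]
      have step : ∀ w : Fin m → ZMod 2, ∑ u : Fin m → ZMod 2,
          eps ((f v + f w) + ∑ i, u i * (v + w) i)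
          = eps (f v + f w) * (if v + w = 0 then (2:ℤ) ^ m else 0) := by
        intro w
        rw [← sum_eps_pairing (v + w), Finset.mul_sum]
        exact Finset.sum_congr rfl fun u _ => eps_add _ _
      simp_rw [step]
      have hcond : ∀ w : Fin m → ZMod 2, (v + w = 0) ↔ (w = v) := by
        intro w
        constructor
        · intro h
          funext j
          have hj := congrFun h j
          simp only [Pi.add_apply, Pi.zero_apply] at hj
          exact zmod2_add_eq_zero _ _ hj
        · intro h; subst h; funext j; simp [zmod2_self]
      have h3 : ∀ w : Fin m → ZMod 2,
          eps (f v + f w) * (if v + w = 0 then (2:ℤ) ^ m else 0)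
          = if w = v then eps (f v + f w) * 2 ^ m else 0 := by
        intro w
        rw [if_congr (hcond w) rfl rfl]
        split_ifs with h
        · rfl
        · exact mul_zero _
      simp_rw [h3]
      rw [Finset.sum_ite_eq' Finset.univ v (fun w => eps (f v + f w) * 2 ^ m)]
      simp [zmod2_self, eps_zero]
    simp_rw [inner]
    rw [Finset.sum_const, Finset.card_univ, hcardV, nsmul_eq_mul]
    push_cast
    ring
  -- nonneg t
  set t : (Fin m → ZMod 2) → ℤ := fun u => 2 * (d u : ℤ) - 2 ^ m with htdef
  have hfar' : ∀ u, (2:ℤ) ^ (m-1) ≤ (d u : ℤ) := by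
    intro u
    exact_mod_cast hfar u
  have ht0 : ∀ u, 0 ≤ t u := by
    intro u
    have h1 := hfar' u
    simp only [htdef]
    nlinarith [hpow]
  have ht2 : ∀ u, t u ≤ 2 ^ m := by
    intro u
    have h1 : d u ≤ Fintype.card (Fin m → ZMod 2) := hammingDist_le_card_fintype
    rw [hcardV] at h1
    have h2 : (d u : ℤ) ≤ 2 ^ m := by exact_mod_cast h1
    simp only [htdef]; linarith
  have htW : ∀ u, t u = - W u := by intro u; rw [hW u]; simp only [htdef]; ring
  have hsumt : ∑ u : Fin m → ZMod 2, t u = - (2 ^ m * eps (f 0)) := by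
    simp_rw [htW]
    rw [Finset.sum_neg_distrib, hsum]
  -- f 0 = 1
  have hf0 : eps (f 0) = -1 := by
    rcases zmod2_cases (f 0) with h | h
    · exfalso
      have hpos : (0:ℤ) ≤ ∑ u : Fin m → ZMod 2, t u :=
        Finset.sum_nonneg fun u _ => ht0 u
      rw [hsumt, h, eps_zero] at hpos
      have hp : (0:ℤ) < 2 ^ m := by positivity
      linarith
    · rw [h]; decide
  have hsumt' : ∑ u : Fin m → ZMod 2, t u = 2 ^ m := by rw [hsumt, hf0]; ring
  have hsqt : ∑ u : Fin m → ZMod 2, (t u) ^ 2 = 2 ^ m * 2 ^ m := by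
    have h4 : ∀ u, (t u)^2 = (W u)^2 := by intro u; rw [htW]; ring
    simp_rw [h4]; exact hsq
  -- each t u ∈ {0, 2^m}
  have hzero : ∀ u : Fin m → ZMod 2, t u * (2 ^ m - t u) = 0 := by
    have hsum0 : ∑ u : Fin m → ZMod 2, t u * (2 ^ m - t u) = 0 := by
      have h5 : ∑ u : Fin m → ZMod 2, t u * (2 ^ m - t u)
          = 2 ^ m * (∑ u : Fin m → ZMod 2, t u) - ∑ u : Fin m → ZMod 2, (t u)^2 := by
        rw [Finset.mul_sum, ← Finset.sum_sub_distrib]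
        exact Finset.sum_congr rfl fun u _ => by ring
      rw [h5, hsumt', hsqt]; ring
    intro u
    exact (Finset.sum_eq_zero_iff_of_nonneg (fun u _ => by
      have := ht0 u; have := ht2 u; nlinarith)).mp hsum0 u (Finset.mem_univ u)
  have hdich : ∀ u : Fin m → ZMod 2, t u = 0 ∨ t u = 2 ^ m := by
    intro u
    rcases mul_eq_zero.mp (hzero u) with h | h
    · exact Or.inl h
    · exact Or.inr (by linarith)
  -- exists u₀ with t u₀ = 2^m
  have hex : ∃ u₀ : Fin m → ZMod 2, t u₀ = 2 ^ m := by
    by_contra h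
    push_neg at h
    have hall : ∀ u : Fin m → ZMod 2, t u = 0 := fun u => (hdich u).resolve_right (h u)
    have h0 : ∑ u : Fin m → ZMod 2, t u = 0 := Finset.sum_eq_zero fun u _ => hall u
    rw [hsumt'] at h0
    have hp : (0:ℤ) < 2 ^ m := by positivity
    linarith
  obtain ⟨u₀, hu₀⟩ := hex
  -- for u ≠ u₀, t u = 0
  have hrest : ∀ u : Fin m → ZMod 2, u ≠ u₀ → t u = 0 := by
    intro u hne
    rcases hdich u with h | h
    · exact h
    · exfalso
      have hle : ∑ x ∈ ({u, u₀} : Finset (Fin m → ZMod 2)), t x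
          ≤ ∑ x : Fin m → ZMod 2, t x :=
        Finset.sum_le_sum_of_subset_of_nonneg (Finset.subset_univ _) (fun x _ _ => ht0 x)
      rw [Finset.sum_pair hne, h, hu₀, hsumt'] at hle
      have hp : (0:ℤ) < 2 ^ m := by positivity
      linarith
  -- translate back
  have hd_u₀ : d u₀ = 2 ^ m := by
    have h6 : (d u₀ : ℤ) = 2 ^ m := by simp only [htdef] at hu₀; linarith
    exact_mod_cast h6
  have hd_rest : ∀ u : Fin m → ZMod 2, u ≠ u₀ → d u = 2 ^ (m-1) := by
    intro u hne
    have h := hrest u hne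
    simp only [htdef] at h
    have h7 : (d u : ℤ) = 2 ^ (m-1) := by linarith [hpow]
    exact_mod_cast h7
  -- f v = 1 + ℓ u₀ v for all v
  have hflip : ∀ v : Fin m → ZMod 2, f v = 1 + ∑ i, u₀ i * v i := by
    intro v
    have huniv : ({v | f v ≠ ∑ i, u₀ i * v i} : Finset (Fin m → ZMod 2)) = Finset.univ := by
      apply Finset.eq_univ_of_card
      rw [← hdist_card u₀, hcardV]
      exact hd_u₀
    have hv : v ∈ ({v | f v ≠ ∑ i, u₀ i * v i} : Finset (Fin m → ZMod 2)) := by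
      rw [huniv]; exact Finset.mem_univ v
    rw [Finset.mem_filter] at hv
    exact (zmod2_ne_iff _ _).mp hv.2
  refine ⟨u₀, ⟨hd_u₀, hflip, hd_rest⟩, ?_⟩
  intro u₁ hu₁
  obtain ⟨h1, -, -⟩ := hu₁
  by_contra hne
  have h8 := hd_rest u₁ hne
  have h9 : d u₁ = 2 ^ m := h1
  rw [h9] at h8
  clear_value d W t
  clear h1 h9 hd hWdef htdef hdist_card hW hlin hsum hsq hfar' ht0 ht2 htW hsumt hf0 hsumt' hsqt hzero hdich hu₀ hrest hd_u₀ hd_rest hflip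
  have hpow_nat : 2 * 2 ^ (m-1) = 2 ^ m := by
    rw [← pow_succ']
    congr 1
    omega
  have hpos_nat : 0 < 2 ^ (m-1) := by positivity
  omega
end

section
/- Let m ≥ 1 and i ≥ 1 be integers with gcd(m, 2i) = gcd(m, i). Then gcd(2^m − 1, 2^i + 1) = 1. -/
/-!
A common divisor `d` of `a ^ m - 1` and `a ^ i + 1` divides `a ^ m - 1` and `a ^ (2 * i) - 1`,
hence their gcd `a ^ gcd m (2 * i) - 1 = a ^ gcd m i - 1`, which divides `a ^ i - 1`.
So `d` divides `(a ^ i + 1) - (a ^ i - 1) = 2`.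
For `a = 2` and `i ≥ 1` the number `2 ^ i + 1` is odd, which forces `d = 1`.
-/

namespace Nat

theorem pow_add_one_dvd_pow_two_mul_sub_one (a i : ℕ) : a ^ i + 1 ∣ a ^ (2 * i) - 1 := by
  rw [mul_comm, pow_mul, ← one_pow 2, Nat.sq_sub_sq]
  exact dvd_mul_right _ _

theorem gcd_pow_sub_one_pow_add_one_dvd_two {a m i : ℕ} (ha : 0 < a)
    (h : gcd m (2 * i) = gcd m i) : gcd (a ^ m - 1) (a ^ i + 1) ∣ 2 := by
  set d := gcd (a ^ m - 1) (a ^ i + 1)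
  have hd_add : d ∣ a ^ i + 1 := gcd_dvd_right _ _
  have hd_sq : d ∣ a ^ gcd m i - 1 := by
    rw [← h, ← pow_sub_one_gcd_pow_sub_one]
    exact dvd_gcd (gcd_dvd_left _ _) (hd_add.trans (pow_add_one_dvd_pow_two_mul_sub_one a i))
  have hd_sub : d ∣ a ^ i - 1 :=
    hd_sq.trans (pow_sub_one_dvd_pow_sub_one a (gcd_dvd_right m i))
  have hdiff : a ^ i + 1 - (a ^ i - 1) = 2 := by
    have := one_le_pow i a ha
    omega
  simpa only [hdiff] using Nat.dvd_sub hd_add hd_sub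

end Nat

theorem gcd_pow_two_sub_one_pow_two_add_one_eq_one_general
    (m i : ℕ) (hi : 1 ≤ i)
    (h : Nat.gcd m (2 * i) = Nat.gcd m i) :
    Nat.gcd (2 ^ m - 1) (2 ^ i + 1) = 1 := by
  have hodd : Odd (2 ^ i + 1) := (Nat.even_pow.mpr ⟨even_two, by omega⟩).add_one
  exact (hodd.of_dvd_nat (Nat.gcd_dvd_right _ _)).coprime_two_right.eq_one_of_dvd
    (Nat.gcd_pow_sub_one_pow_add_one_dvd_two two_pos h)

theorem gcd_pow_two_sub_one_pow_two_add_one_eq_one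
    (m i : ℕ) (hm : 1 ≤ m) (hi : 1 ≤ i)
    (h : Nat.gcd m (2 * i) = Nat.gcd m i) :
    Nat.gcd (2 ^ m - 1) (2 ^ i + 1) = 1 :=
  gcd_pow_two_sub_one_pow_two_add_one_eq_one_general m i hi h
end

section
/- Let m = 2t + 1 be odd with t ≥ 1, let n = 2^m − 1, and let 1 ≤ i ≤ t. Then the cyclotomic coset of l_i = 1 + 2^i modulo n, i.e. the set { (1 + 2^i) · 2^j mod n : j ∈ ℕ }, has cardinality exactly m. -/
/-!
Modulo `n = 2 ^ m - 1` we have `2 ^ m ≡ 1`, and the powers `2 ^ j` with `j < m` are distinct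
residues (for `m ≥ 2` they lie below `n`), so `2` has order exactly `m` and, for `l` coprime to
`n`, the coset `{l * 2 ^ j mod n}` has exactly `m` elements. For odd `m`, a common divisor `d` of
`1 + 2 ^ i` and `n` divides `2 ^ (2 * i) - 1`, hence `2 ^ gcd (2 * i) m - 1 = 2 ^ gcd i m - 1`,
hence `2 ^ i - 1`; so `d ∣ 2`, and `d` is odd.
-/

open Function Set

theorem Function.Periodic.ncard_range_of_injOn {α : Type*} {f : ℕ → α} {m : ℕ}
    (hf : Periodic f m) (hm : 0 < m) (hinj : (Iio m).InjOn f) : (range f).ncard = m := by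
  have hrange : range f = f '' Iio m := by
    refine Subset.antisymm ?_ (image_subset_range f _)
    rintro _ ⟨j, rfl⟩
    exact ⟨j % m, Nat.mod_lt j hm, hf.map_mod_nat j⟩
  rw [hrange, hinj.ncard_image, ncard_Iio_nat]

namespace Nat

theorem odd_two_pow_sub_one {m : ℕ} (hm : m ≠ 0) : Odd (2 ^ m - 1) :=
  Nat.Even.sub_odd Nat.one_le_two_pow ((Nat.even_pow' hm).mpr even_two) odd_one

theorem coprime_one_add_two_pow_two_pow_sub_one {m : ℕ} (hm : Odd m) (i : ℕ) :
    Coprime (1 + 2 ^ i) (2 ^ m - 1) := by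
  set d := gcd (1 + 2 ^ i) (2 ^ m - 1)
  have hd_sq : d ∣ 2 ^ (2 * i) - 1 := by
    refine (gcd_dvd_left _ _).trans ⟨2 ^ i - 1, ?_⟩
    rw [mul_comm 2 i, pow_mul, ← one_pow 2, Nat.sq_sub_sq, one_pow, add_comm]
  have hd_sub : d ∣ 2 ^ i - 1 :=
    calc d ∣ gcd (2 ^ (2 * i) - 1) (2 ^ m - 1) := dvd_gcd hd_sq (gcd_dvd_right _ _)
      _ = gcd (2 ^ i - 1) (2 ^ m - 1) := by
        rw [pow_sub_one_gcd_pow_sub_one, pow_sub_one_gcd_pow_sub_one,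
          Coprime.gcd_mul_left_cancel i (coprime_two_left.mpr hm)]
      _ ∣ 2 ^ i - 1 := gcd_dvd_left _ _
  have hd_two : d ∣ 2 := by
    have := Nat.dvd_sub (gcd_dvd_left _ _) hd_sub
    rwa [show 1 + 2 ^ i - (2 ^ i - 1) = 2 by have := @Nat.one_le_two_pow i; omega] at this
  have hd_odd : Odd d := (odd_two_pow_sub_one hm.pos.ne').of_dvd_nat (gcd_dvd_right _ _)
  exact ((dvd_prime prime_two).mp hd_two).resolve_right fun hd => by
    rw [hd] at hd_odd
    exact not_even_iff_odd.mpr hd_odd even_two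

theorem two_pow_modEq_one (m : ℕ) : 2 ^ m ≡ 1 [MOD 2 ^ m - 1] :=
  (modEq_iff_dvd' Nat.one_le_two_pow).mpr dvd_rfl |>.symm

theorem injOn_two_pow_mod_two_pow_sub_one (m : ℕ) :
    (Iio m).InjOn fun j => 2 ^ j % (2 ^ m - 1) := by
  intro j (hj : j < m) k (hk : k < m) hjk
  rcases Nat.lt_or_ge m 2 with hm | hm
  · omega
  have hlt : ∀ a < m, 2 ^ a < 2 ^ m - 1 := fun a ha => by
    have h₁ : 2 ^ a ≤ 2 ^ (m - 1) := Nat.pow_le_pow_right two_pos (by omega)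
    have h₂ : 2 ^ 1 ≤ 2 ^ (m - 1) := Nat.pow_le_pow_right two_pos (by omega)
    have h₃ : 2 ^ m = 2 ^ (m - 1) * 2 := by rw [← pow_succ, Nat.sub_add_cancel (by omega)]
    omega
  simp only [mod_eq_of_lt (hlt j hj), mod_eq_of_lt (hlt k hk)] at hjk
  exact Nat.pow_right_injective le_rfl hjk

theorem ncard_setOf_mul_two_pow_mod {l m : ℕ} (hm : 0 < m) (hl : Coprime l (2 ^ m - 1)) :
    {x : ℕ | ∃ j : ℕ, x = l * 2 ^ j % (2 ^ m - 1)}.ncard = m := by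
  have hper : Periodic (fun j => l * 2 ^ j % (2 ^ m - 1)) m := fun j => by
    change l * 2 ^ (j + m) ≡ l * 2 ^ j [MOD 2 ^ m - 1]
    simpa only [pow_add, mul_assoc, mul_one] using (two_pow_modEq_one m).mul_left (l * 2 ^ j)
  have hinj : (Iio m).InjOn fun j => l * 2 ^ j % (2 ^ m - 1) := fun j hj k hk hjk =>
    injOn_two_pow_mod_two_pow_sub_one m hj hk (Nat.ModEq.cancel_left_of_coprime hl.symm hjk)
  convert hper.ncard_range_of_injOn hm hinj using 2
  exact ext fun x => exists_congr fun j => eq_comm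

end Nat

theorem cyclotomic_coset_card_odd_general
    (t : ℕ) (i : ℕ) :
    {x : ℕ | ∃ j : ℕ, x = (1 + 2 ^ i) * 2 ^ j % (2 ^ (2 * t + 1) - 1)}.ncard
      = 2 * t + 1 :=
  Nat.ncard_setOf_mul_two_pow_mod (Nat.succ_pos _)
    (Nat.coprime_one_add_two_pow_two_pow_sub_one (odd_two_mul_add_one t) i)

theorem cyclotomic_coset_card_odd
    (t : ℕ) (ht : 1 ≤ t) (i : ℕ) (hi1 : 1 ≤ i) (hit : i ≤ t) :
    {x : ℕ | ∃ j : ℕ, x = (1 + 2 ^ i) * 2 ^ j % (2 ^ (2 * t + 1) - 1)}.ncard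
      = 2 * t + 1 :=
  cyclotomic_coset_card_odd_general t i
end

section
/- Let m = 2t + 2 be even with t ≥ 0 and let n = 2^m − 1. Then: (a) for every i with 1 ≤ i ≤ t, the cyclotomic coset of 1 + 2^i modulo n, i.e. the set { (1 + 2^i) · 2^j mod n : j ∈ ℕ }, has cardinality exactly m; and (b) the cyclotomic coset of 1 + 2^(t+1) modulo n has cardinality exactly m/2 = t + 1. -/
/-!
Modulo `2^m - 1`, doubling rotates the `m` binary digits of a residue cyclically. The number
`1 + 2^i` has two binary digits at cyclic distance `i`, so its coset consists of the two-digit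
numbers `2^a + 2^(a+i)`, exponents taken mod `m`. By uniqueness of binary expansions two rotations
give the same number only if they move the pair of digit positions onto itself: for `0 < 2i < m`
that needs a full turn, while for `2i = m` half a turn swaps the two digits.
-/

def cyclotomicCoset (n s : ℕ) : Set ℕ := {x | ∃ j, x = s * 2 ^ j % n}

section General

variable {n s p : ℕ}

theorem periodic_mul_two_pow_mod (hs : s * 2 ^ p ≡ s [MOD n]) :
    Function.Periodic (fun j => s * 2 ^ j % n) p := fun j => by
  change s * 2 ^ (j + p) ≡ s * 2 ^ j [MOD n]
  rw [pow_add, mul_comm (2 ^ j), ← mul_assoc]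
  exact hs.mul_right _

theorem cyclotomicCoset_eq_image (hp : 0 < p) (hs : s * 2 ^ p ≡ s [MOD n]) :
    cyclotomicCoset n s = (fun j => s * 2 ^ j % n) '' Set.Iio p := by
  ext x
  constructor
  · rintro ⟨j, rfl⟩
    exact ⟨j % p, Nat.mod_lt j hp, (periodic_mul_two_pow_mod hs).map_mod_nat j⟩
  · rintro ⟨j, -, rfl⟩
    exact ⟨j, rfl⟩

theorem ncard_cyclotomicCoset (hp : 0 < p) (hs : s * 2 ^ p ≡ s [MOD n])
    (hinj : Set.InjOn (fun j => s * 2 ^ j % n) (Set.Iio p)) :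
    (cyclotomicCoset n s).ncard = p := by
  rw [cyclotomicCoset_eq_image hp hs, hinj.ncard_image, ← Finset.coe_range,
    Set.ncard_coe_finset, Finset.card_range]

end General

section Mersenne

variable {m i j j' : ℕ}

theorem two_pow_modEq_two_pow_mod (m k : ℕ) : 2 ^ k ≡ 2 ^ (k % m) [MOD 2 ^ m - 1] := by
  conv_lhs => rw [← Nat.div_add_mod k m, pow_add, pow_mul]
  simpa using ((Nat.modEq_sub Nat.one_le_two_pow).pow (k / m)).mul_right (2 ^ (k % m))

theorem mul_two_pow_modEq_self (s m : ℕ) : s * 2 ^ m ≡ s [MOD 2 ^ m - 1] := by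
  simpa using (Nat.modEq_sub Nat.one_le_two_pow).mul_left s

theorem sum_two_pow_lt_of_subset_range {s : Finset ℕ} (hs : s ⊆ Finset.range m)
    (hne : s ≠ Finset.range m) : ∑ k ∈ s, 2 ^ k < 2 ^ m - 1 := by
  have hgeom : ∑ k ∈ Finset.range m, 2 ^ k = 2 ^ m - 1 := by simp [Nat.geomSum_eq le_rfl]
  rw [← hgeom]
  exact (Finset.sum_le_sum_of_subset hs).lt_of_ne
    fun h => hne (Finset.geomSum_injective le_rfl h)

-- For `m ≥ 3` a number with two binary digits below position `m` is already reduced modulo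
-- `2^m - 1 = 11…1₂`; the pair of exponents is kept as a `Finset` for uniqueness of binary expansions.
theorem one_add_two_pow_mul_two_pow_mod (hm : 3 ≤ m) (hi : i % m ≠ 0) :
    (1 + 2 ^ i) * 2 ^ j % (2 ^ m - 1) = ∑ k ∈ {j % m, (i + j) % m}, 2 ^ k := by
  have hne : j % m ≠ (i + j) % m := fun h => by
    have : i + j ≡ 0 + j [MOD m] := by rw [zero_add]; exact h.symm
    exact hi (Nat.ModEq.add_right_cancel' j this)
  have hsub : ({j % m, (i + j) % m} : Finset ℕ) ⊆ Finset.range m := by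
    simp [Finset.insert_subset_iff, Nat.mod_lt _ (by omega : 0 < m)]
  have hcard : ({j % m, (i + j) % m} : Finset ℕ) ≠ Finset.range m := fun h => by
    have := congrArg Finset.card h
    rw [Finset.card_pair hne, Finset.card_range] at this
    omega
  have hcong : (1 + 2 ^ i) * 2 ^ j ≡ 2 ^ (j % m) + 2 ^ ((i + j) % m) [MOD 2 ^ m - 1] := by
    rw [add_mul, one_mul, ← pow_add]
    exact (two_pow_modEq_two_pow_mod m j).add (two_pow_modEq_two_pow_mod m (i + j))
  have hlt := sum_two_pow_lt_of_subset_range hsub hcard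
  rw [Finset.sum_pair hne] at hlt ⊢
  exact Eq.trans hcong (Nat.mod_eq_of_lt hlt)

theorem modEq_or_of_one_add_two_pow_mul_two_pow_mod_eq (hm : 3 ≤ m) (hi : i % m ≠ 0)
    (h : (1 + 2 ^ i) * 2 ^ j % (2 ^ m - 1) = (1 + 2 ^ i) * 2 ^ j' % (2 ^ m - 1)) :
    j ≡ j' [MOD m] ∨ j ≡ i + j' [MOD m] ∧ i + j ≡ j' [MOD m] := by
  rw [one_add_two_pow_mul_two_pow_mod hm hi, one_add_two_pow_mul_two_pow_mod hm hi] at h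
  have hpair := congrArg ((↑) : Finset ℕ → Set ℕ) (Finset.geomSum_injective le_rfl h)
  simp only [Finset.coe_pair] at hpair
  exact (Set.pair_eq_pair_iff.1 hpair).imp And.left id

theorem injOn_one_add_two_pow_mul_two_pow_mod (hi : 0 < i) (him : 2 * i < m) :
    Set.InjOn (fun j => (1 + 2 ^ i) * 2 ^ j % (2 ^ m - 1)) (Set.Iio m) := by
  intro j hj j' hj' h
  rcases modEq_or_of_one_add_two_pow_mul_two_pow_mod_eq (by omega)
    (by rw [Nat.mod_eq_of_lt (by omega)]; omega) h with hjj' | ⟨hcross, hcross'⟩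
  · exact hjj'.eq_of_lt_of_lt hj hj'
  · have : 2 * i + j' ≡ 0 + j' [MOD m] :=
      calc 2 * i + j' = i + (i + j') := by ring
        _ ≡ i + j [MOD m] := hcross.symm.add_left i
        _ ≡ j' [MOD m] := hcross'
        _ = 0 + j' := (zero_add j').symm
    have hdvd := Nat.modEq_zero_iff_dvd.1 (Nat.ModEq.add_right_cancel' j' this)
    exact absurd (Nat.le_of_dvd (by omega) hdvd) (by omega)

theorem injOn_one_add_two_pow_mul_two_pow_mod_half (k : ℕ) :
    Set.InjOn (fun j => (1 + 2 ^ k) * 2 ^ j % (2 ^ (2 * k) - 1)) (Set.Iio k) := by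
  intro j hj j' hj' hjj'
  simp only [Set.mem_Iio] at hj hj'
  rcases Nat.lt_or_ge k 2 with hk | hk
  · omega
  rcases modEq_or_of_one_add_two_pow_mul_two_pow_mod_eq (by omega)
    (by rw [Nat.mod_eq_of_lt (by omega)]; omega) hjj' with hmod | ⟨hcross, -⟩
  · exact hmod.eq_of_lt_of_lt (by omega) (by omega)
  · have := hcross.eq_of_lt_of_lt (by omega) (by omega)
    omega

theorem ncard_cyclotomicCoset_one_add_two_pow (hi : 0 < i) (him : 2 * i < m) :
    (cyclotomicCoset (2 ^ m - 1) (1 + 2 ^ i)).ncard = m :=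
  ncard_cyclotomicCoset (by omega) (mul_two_pow_modEq_self _ m)
    (injOn_one_add_two_pow_mul_two_pow_mod hi him)

theorem ncard_cyclotomicCoset_one_add_two_pow_half {k : ℕ} (hk : 0 < k) :
    (cyclotomicCoset (2 ^ (2 * k) - 1) (1 + 2 ^ k)).ncard = k := by
  refine ncard_cyclotomicCoset hk ?_ (injOn_one_add_two_pow_mul_two_pow_mod_half k)
  calc (1 + 2 ^ k) * 2 ^ k = 2 ^ k + 2 ^ (2 * k) := by ring
    _ ≡ 2 ^ k + 1 [MOD 2 ^ (2 * k) - 1] := (Nat.modEq_sub Nat.one_le_two_pow).add_left _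
    _ = 1 + 2 ^ k := add_comm _ _

end Mersenne

theorem cyclotomic_coset_card_even
    (t : ℕ) :
    (∀ i : ℕ, 1 ≤ i → i ≤ t →
      {x : ℕ | ∃ j : ℕ, x = (1 + 2 ^ i) * 2 ^ j % (2 ^ (2 * t + 2) - 1)}.ncard
        = 2 * t + 2) ∧
    {x : ℕ | ∃ j : ℕ, x = (1 + 2 ^ (t + 1)) * 2 ^ j % (2 ^ (2 * t + 2) - 1)}.ncard
      = t + 1 := by
  refine ⟨fun i hi1 hit => ncard_cyclotomicCoset_one_add_two_pow hi1 (by omega), ?_⟩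
  rw [show 2 * t + 2 = 2 * (t + 1) by ring]
  exact ncard_cyclotomicCoset_one_add_two_pow_half t.succ_pos
end

section
/- Let m = 2t + 2 with t ≥ 0, let F = GF(2^m) (the Galois field with 2^m elements), let 1 ≤ d ≤ t + 1, and let γ_d, γ_(d+1), …, γ_(t+1) ∈ F, not all zero. Define L : F → F by L(η) = (∑_{j=d}^{t} γ_j · ((γ_j · η)^(2^j) + (γ_j · η)^(2^(m−j)))) + γ_(t+1) · (γ_(t+1) · η)^(2^(t+1)). Then L is an F₂-linear map, and the set { η ∈ F : L(η) = 0 } has cardinality at most 2^(m − 2d); equivalently, the kernel of L is an F₂-subspace of F of dimension at most m − 2d. -/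
/-!
Collecting the terms of `L` by exponent gives `L η = ∑_{e=d}^{m-d} a_e η^(2^e)` with
`a_e = γ_{min(e, m-e)}^(1 + 2^e)`, a sum that is additive in `η`. As the Frobenius is bijective,
this sum is the `2^d`-th power of `∑ b_e η^(2^(e-d))` with `b_e^(2^d) = a_e`: a polynomial whose
monomials are distinct, so it is nonzero as soon as one `γ_j` is, and it has degree at most
`2^(m-2d)`, which bounds the number of its roots.
-/

open Polynomial Finset

theorem ncard_setOf_sum_mul_pow_eq_zero_le {R ι : Type*} [CommRing R] [IsDomain R]
    {s : Finset ι} (a : ι → R) {k : ι → ℕ} (hk : Set.InjOn k s) {N : ℕ}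
    (hkN : ∀ i ∈ s, k i ≤ N) (ha : ∃ i ∈ s, a i ≠ 0) :
    {x : R | ∑ i ∈ s, a i * x ^ k i = 0}.ncard ≤ N := by
  classical
  set g : R[X] := ∑ i ∈ s, C (a i) * X ^ k i
  have hcoeff : ∀ i ∈ s, g.coeff (k i) = a i := fun i hi => by
    simp only [g, finsetSum_coeff, coeff_C_mul_X_pow]
    rw [Finset.sum_eq_single i (fun j hj hji => if_neg (hk.ne hi hj hji.symm)) (absurd hi)]
    exact if_pos rfl
  obtain ⟨i₀, hi₀, hai₀⟩ := ha
  have hg : g ≠ 0 := fun h => hai₀ (by rw [← hcoeff i₀ hi₀, h, coeff_zero])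
  have hdeg : g.natDegree ≤ N :=
    natDegree_sum_le_of_forall_le _ _ fun i hi => (natDegree_C_mul_X_pow_le _ _).trans (hkN i hi)
  have hzero : {x : R | ∑ i ∈ s, a i * x ^ k i = 0} = ↑g.roots.toFinset := by
    ext x
    simp [g, mem_roots', hg, eval_finsetSum]
  calc _ = g.roots.toFinset.card := by rw [hzero, Set.ncard_coe_finset]
    _ ≤ Multiset.card g.roots := g.roots.toFinset_card_le
    _ ≤ g.natDegree := g.card_roots'
    _ ≤ N := hdeg

theorem ncard_setOf_sum_mul_pow_pow_eq_zero_le {F : Type*} [Field F] (p : ℕ) [Fact p.Prime]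
    [CharP F p] [PerfectRing F p] {s : Finset ℕ} (a : ℕ → F) {d n : ℕ}
    (hs : ∀ e ∈ s, d ≤ e ∧ e ≤ n) (ha : ∃ e ∈ s, a e ≠ 0) :
    {x : F | ∑ e ∈ s, a e * x ^ p ^ e = 0}.ncard ≤ p ^ (n - d) := by
  set φ := iterateFrobeniusEquiv F p d
  have hroot : ∀ x : F,
      ∑ e ∈ s, a e * x ^ p ^ e = φ (∑ e ∈ s, φ.symm (a e) * x ^ p ^ (e - d)) := fun x => by
    simp only [map_sum, map_mul, map_pow, RingEquiv.apply_symm_apply]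
    refine Finset.sum_congr rfl fun e he => ?_
    rw [iterateFrobeniusEquiv_def, ← pow_mul, ← pow_add, Nat.add_sub_cancel' (hs e he).1]
  simp only [hroot, map_eq_zero_iff _ φ.injective]
  have hp : 1 < p := (Fact.out : p.Prime).one_lt
  refine ncard_setOf_sum_mul_pow_eq_zero_le _ (fun e he e' he' h => ?_)
    (fun e he => Nat.pow_le_pow_right hp.le (by have := hs e he; omega)) ?_
  · have := Nat.pow_right_injective hp h
    have := hs e he; have := hs e' he'
    omega
  · obtain ⟨e, he, hae⟩ := ha
    exact ⟨e, he, by simpa using hae⟩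

theorem isLinearMap_sum_mul_pow_pow {F : Type*} [CommRing F] (p : ℕ) [Fact p.Prime] [CharP F p]
    [Module (ZMod p) F] (s : Finset ℕ) (a : ℕ → F) :
    IsLinearMap (ZMod p) fun x : F => ∑ e ∈ s, a e * x ^ p ^ e :=
  (AddMonoidHom.toZModLinearMap p
    { toFun := fun x => ∑ e ∈ s, a e * x ^ p ^ e
      map_zero' := by simp [(Fact.out : p.Prime).ne_zero]
      map_add' := fun x y => by simp only [add_pow_char_pow, mul_add, sum_add_distrib] }).isLinear

theorem sum_Icc_add_sum_Icc_reflect {M : Type*} [AddCommMonoid M] (f : ℕ → M) {d t : ℕ}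
    (hd : d ≤ t + 1) :
    ∑ j ∈ Icc d t, (f j + f (2 * t + 2 - j)) + f (t + 1) = ∑ e ∈ Icc d (2 * t + 2 - d), f e := by
  have hreflect : ∑ j ∈ Ico d (t + 1), f (2 * t + 2 - j) = ∑ e ∈ Ico (t + 2) (2 * t + 3 - d), f e := by
    rw [sum_Ico_reflect f d (m := t + 1) (n := 2 * t + 2) (by omega)]
    congr 2; omega
  rw [sum_add_distrib, ← Ico_add_one_right_eq_Icc, ← Ico_add_one_right_eq_Icc, hreflect,
    add_right_comm, ← sum_Ico_succ_top hd, sum_Ico_consecutive _ (by omega) (by omega)]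
  congr 2; omega

theorem linearized_polynomial_kernel_bound_general
    (t : ℕ) (d : ℕ) (hd2 : d ≤ t + 1)
    (γ : ℕ → GaloisField 2 (2 * t + 2))
    (hγ : ∃ j : ℕ, d ≤ j ∧ j ≤ t + 1 ∧ γ j ≠ 0) :
    IsLinearMap (ZMod 2)
      (fun η : GaloisField 2 (2 * t + 2) =>
        (∑ j ∈ Finset.Icc d t,
          γ j * ((γ j * η) ^ 2 ^ j + (γ j * η) ^ 2 ^ (2 * t + 2 - j))) +
        γ (t + 1) * (γ (t + 1) * η) ^ 2 ^ (t + 1)) ∧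
    {η : GaloisField 2 (2 * t + 2) |
      (∑ j ∈ Finset.Icc d t,
        γ j * ((γ j * η) ^ 2 ^ j + (γ j * η) ^ 2 ^ (2 * t + 2 - j))) +
      γ (t + 1) * (γ (t + 1) * η) ^ 2 ^ (t + 1) = 0}.ncard
      ≤ 2 ^ (2 * t + 2 - 2 * d) := by
  set a : ℕ → GaloisField 2 (2 * t + 2) := fun e => γ (min e (2 * t + 2 - e)) ^ (1 + 2 ^ e)
  have hL : ∀ η, (∑ j ∈ Icc d t, γ j * ((γ j * η) ^ 2 ^ j + (γ j * η) ^ 2 ^ (2 * t + 2 - j))) +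
      γ (t + 1) * (γ (t + 1) * η) ^ 2 ^ (t + 1) = ∑ e ∈ Icc d (2 * t + 2 - d), a e * η ^ 2 ^ e := by
    intro η
    rw [← sum_Icc_add_sum_Icc_reflect (fun e => a e * η ^ 2 ^ e) hd2]
    refine congrArg₂ (· + ·) (sum_congr rfl fun j hj => ?_) ?_
    · have hjt := (mem_Icc.mp hj).2
      simp only [a, min_eq_left (by omega : j ≤ 2 * t + 2 - j),
        min_eq_right (by omega : j ≤ 2 * t + 2 - j),
        Nat.sub_sub_self (by omega : j ≤ 2 * t + 2)]
      ring
    · simp only [a, min_eq_left (by omega : t + 1 ≤ 2 * t + 2 - (t + 1))]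
      ring
  simp only [hL]
  refine ⟨isLinearMap_sum_mul_pow_pow 2 _ a, ?_⟩
  obtain ⟨j, hdj, hjt, hγj⟩ := hγ
  refine (ncard_setOf_sum_mul_pow_pow_eq_zero_le 2 a (fun e he => mem_Icc.mp he)
    ⟨j, mem_Icc.mpr ⟨hdj, by omega⟩,
      by simpa [a, min_eq_left (by omega : j ≤ 2 * t + 2 - j)] using hγj⟩).trans_eq ?_
  congr 1; omega

theorem linearized_polynomial_kernel_bound
    (t : ℕ) (d : ℕ) (hd1 : 1 ≤ d) (hd2 : d ≤ t + 1)
    (γ : ℕ → GaloisField 2 (2 * t + 2))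
    (hγ : ∃ j : ℕ, d ≤ j ∧ j ≤ t + 1 ∧ γ j ≠ 0) :
    IsLinearMap (ZMod 2)
      (fun η : GaloisField 2 (2 * t + 2) =>
        (∑ j ∈ Finset.Icc d t,
          γ j * ((γ j * η) ^ 2 ^ j + (γ j * η) ^ 2 ^ (2 * t + 2 - j))) +
        γ (t + 1) * (γ (t + 1) * η) ^ 2 ^ (t + 1)) ∧
    {η : GaloisField 2 (2 * t + 2) |
      (∑ j ∈ Finset.Icc d t,
        γ j * ((γ j * η) ^ 2 ^ j + (γ j * η) ^ 2 ^ (2 * t + 2 - j))) +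
      γ (t + 1) * (γ (t + 1) * η) ^ 2 ^ (t + 1) = 0}.ncard
      ≤ 2 ^ (2 * t + 2 - 2 * d) :=
  linearized_polynomial_kernel_bound_general t d hd2 γ hγ
end

section
/- Let m ≥ 2 be even and let C be an F₂-linear subspace of (Fin (2^m) → ZMod 2) of dimension 1 + 3m/2 that contains the all-one vector (i.e. C is self-complementary). Then C contains a nonzero element of Hamming weight at most 2^(m-1) − 2^(m/2 − 1); i.e. the minimum distance of C is at most 2^(m-1) − 2^(m/2 − 1), so a self-complementary linear [2^m, 1 + 3m/2, 2^(m-1) − 2^(m/2−1)] code is minimum distance optimal among self-complementary linear codes of that length and dimension. -/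
/-!
For a binary word `v` of length `n`, `∑ i, (-1) ^ v i = n - 2 * wt v`. Summed over a linear
code `C`, the squares of these sums expand into `∑ i j, ∑ v ∈ C, (-1) ^ (v i + v j)`, and each
inner sum is `|C|` or `0`, so the total is at least `n * |C|`. If every codeword other than `0`
and `1` had weight at least `d`, self-complementarity would put every such weight in
`[d, n - d]`, bounding the total by `|C| * (n - 2d) ^ 2 + 2 * n ^ 2`. For `n = 2 ^ m`,
`|C| = 2 ^ (1 + 3m/2)` and `d = 2 ^ (m - 1) - 2 ^ (m/2 - 1) + 1` the two bounds are incompatible.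
-/

open Finset

def bitSign (a : ZMod 2) : ℤ := (-1) ^ a.val

lemma bitSign_add (a b : ZMod 2) : bitSign (a + b) = bitSign a * bitSign b := by
  revert a b; decide

lemma bitSign_add_one (a : ZMod 2) : bitSign (a + 1) = -bitSign a := by
  revert a; decide

lemma bitSign_add_self (a : ZMod 2) : bitSign (a + a) = 1 := by
  revert a; decide

lemma bitSign_eq_ite (a : ZMod 2) : bitSign a = if a = 0 then 1 else -1 := by
  revert a; decide

lemma sum_bitSign_nonneg {G : Type*} [AddCommGroup G] [Fintype G] (φ : G →+ ZMod 2) :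
    0 ≤ ∑ g, bitSign (φ g) := by
  by_cases hφ : ∀ g, φ g = 0
  · simp [hφ, bitSign]
  · push Not at hφ
    obtain ⟨g₀, hg₀⟩ := hφ
    replace hg₀ : φ g₀ = 1 := Fin.eq_one_of_ne_zero _ hg₀
    have hflip : ∑ g, bitSign (φ g) = -∑ g, bitSign (φ g) := calc
      ∑ g, bitSign (φ g) = ∑ g, bitSign (φ (g + g₀)) :=
        (Fintype.sum_equiv (Equiv.addRight g₀) _ _ fun _ => rfl).symm
      _ = -∑ g, bitSign (φ g) := by simp [hg₀, bitSign_add_one, sum_neg_distrib]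
    linarith

section

variable {ι : Type*} [Fintype ι]

lemma sum_bitSign_eq_card_sub_two_mul_hammingNorm (v : ι → ZMod 2) :
    ∑ i, bitSign (v i) = Fintype.card ι - 2 * hammingNorm v := by
  classical
  simp only [bitSign_eq_ite, sum_ite, sum_const, smul_neg, nsmul_eq_mul, mul_one, hammingNorm]
  have := card_filter_add_card_filter_not (s := univ) (fun i => v i = 0)
  rw [card_univ] at this
  push_cast [← this]
  ring

lemma sum_bitSign_add_one (v : ι → ZMod 2) :
    ∑ i, bitSign ((v + 1) i) = -∑ i, bitSign (v i) := by
  simp [bitSign_add_one, sum_neg_distrib]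

lemma sq_sum_bitSign_le_card_sq (v : ι → ZMod 2) :
    (∑ i, bitSign (v i)) ^ 2 ≤ (Fintype.card ι : ℤ) ^ 2 := by
  have hle : (hammingNorm v : ℤ) ≤ Fintype.card ι := mod_cast hammingNorm_le_card_fintype
  have hnonneg : (0 : ℤ) ≤ hammingNorm v := by positivity
  rw [sum_bitSign_eq_card_sub_two_mul_hammingNorm]
  exact sq_le_sq' (by linarith) (by linarith)

variable {C : Submodule (ZMod 2) (ι → ZMod 2)}

lemma sq_sum_bitSign_le_of_le_hammingNorm (hone : 1 ∈ C) {d : ℕ}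
    (hd : ∀ v ∈ C, v ≠ 0 → v ≠ 1 → d ≤ hammingNorm v)
    {v : ι → ZMod 2} (hv : v ∈ C) (h0 : v ≠ 0) (h1 : v ≠ 1) :
    (∑ i, bitSign (v i)) ^ 2 ≤ ((Fintype.card ι : ℤ) - 2 * d) ^ 2 := by
  have hv' : (d : ℤ) ≤ hammingNorm v := mod_cast hd v hv h0 h1
  have hc : (d : ℤ) ≤ hammingNorm (v + 1) := by
    refine mod_cast hd _ (C.add_mem hv hone) ?_ ?_
    · rwa [Ne, add_eq_zero_iff_eq_neg, ZModModule.neg_eq_self]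
    · rwa [Ne, add_eq_right]
  have h := sum_bitSign_add_one v
  simp only [sum_bitSign_eq_card_sub_two_mul_hammingNorm] at h ⊢
  exact sq_le_sq' (by linarith) (by linarith)

variable [Fintype C]

lemma card_mul_card_le_sum_sq_sum_bitSign :
    (Fintype.card ι : ℤ) * Fintype.card C ≤ ∑ v : C, (∑ i, bitSign (v.1 i)) ^ 2 := by
  have hpair (i j : ι) : 0 ≤ ∑ v : C, bitSign (v.1 i + v.1 j) :=
    (sum_bitSign_nonneg ((LinearMap.proj (R := ZMod 2) (φ := fun _ : ι => ZMod 2) i +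
      LinearMap.proj j) ∘ₗ C.subtype).toAddMonoidHom :)
  calc (Fintype.card ι : ℤ) * Fintype.card C
        = ∑ i : ι, ∑ v : C, bitSign (v.1 i + v.1 i) := by
        simp [bitSign_add_self]
    _ ≤ ∑ i, ∑ j, ∑ v : C, bitSign (v.1 i + v.1 j) :=
        sum_le_sum fun i _ => single_le_sum (fun j _ => hpair i j) (mem_univ i)
    _ = ∑ v : C, (∑ i, bitSign (v.1 i)) ^ 2 := by
        simp only [sq, Fintype.sum_mul_sum, bitSign_add]
        exact (Finset.sum_congr rfl fun i _ => sum_comm).trans sum_comm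

lemma sum_sq_sum_bitSign_le (hone : 1 ∈ C) {d : ℕ}
    (hd : ∀ v ∈ C, v ≠ 0 → v ≠ 1 → d ≤ hammingNorm v) :
    ∑ v : C, (∑ i, bitSign (v.1 i)) ^ 2
      ≤ Fintype.card C * ((Fintype.card ι : ℤ) - 2 * d) ^ 2
        + 2 * (Fintype.card ι : ℤ) ^ 2 := by
  classical
  set n : ℤ := (Fintype.card ι : ℤ)
  have hpt : ∀ v : C, (∑ i, bitSign (v.1 i)) ^ 2 ≤ (n - 2 * d) ^ 2
      + ((if v = 0 then n ^ 2 else 0) + if v = ⟨1, hone⟩ then n ^ 2 else 0) := by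
    intro v
    have hn := sq_sum_bitSign_le_card_sq v.1
    have hsq := sq_nonneg (n - 2 * d)
    by_cases h0 : v = 0
    · have : (0 : ℤ) ≤ if v = ⟨1, hone⟩ then n ^ 2 else 0 := by positivity
      rw [if_pos h0]; linarith
    by_cases h1 : v = ⟨1, hone⟩
    · rw [if_neg h0, if_pos h1]; linarith
    rw [if_neg h0, if_neg h1, add_zero, add_zero]
    exact sq_sum_bitSign_le_of_le_hammingNorm hone hd v.2 (by simpa using h0)
      fun h => h1 (Subtype.ext h)
  refine (sum_le_sum fun v _ => hpt v).trans ?_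
  simp [sum_add_distrib, two_mul]

theorem card_mul_card_le_of_le_hammingNorm (hone : 1 ∈ C) {d : ℕ}
    (hd : ∀ v ∈ C, v ≠ 0 → v ≠ 1 → d ≤ hammingNorm v) :
    (Fintype.card ι : ℤ) * Fintype.card C
      ≤ Fintype.card C * ((Fintype.card ι : ℤ) - 2 * d) ^ 2
        + 2 * (Fintype.card ι : ℤ) ^ 2 :=
  card_mul_card_le_sum_sq_sum_bitSign.trans (sum_sq_sum_bitSign_le hone hd)

end

theorem self_complementary_grey_rankin_optimal
    (m : ℕ) (hm : 2 ≤ m) (hme : Even m)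
    (C : Submodule (ZMod 2) (Fin (2 ^ m) → ZMod 2))
    (hdim : Module.finrank (ZMod 2) C = 1 + 3 * m / 2)
    (hone : (fun _ => (1 : ZMod 2)) ∈ C) :
    ∃ x ∈ C, x ≠ 0 ∧ hammingNorm x ≤ 2 ^ (m - 1) - 2 ^ (m / 2 - 1) := by
  classical
  obtain ⟨k, rfl⟩ : ∃ k, m = 2 * k + 2 := by
    obtain ⟨r, hr⟩ := hme
    exact ⟨r - 1, by omega⟩
  by_contra! hlight
  have key := card_mul_card_le_of_le_hammingNorm hone
    (d := 2 ^ (2 * k + 2 - 1) - 2 ^ ((2 * k + 2) / 2 - 1) + 1) fun v hv h0 _ => hlight v hv h0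
  have hcardC : Fintype.card C = 2 ^ (3 * k + 4) := by
    rw [Module.card_eq_pow_finrank (K := ZMod 2), ZMod.card, hdim]
    congr 1
    omega
  have hle : 2 ^ k ≤ 2 ^ (2 * k + 1) := Nat.pow_le_pow_right two_pos (by omega)
  rw [show 2 * k + 2 - 1 = 2 * k + 1 by omega, show (2 * k + 2) / 2 - 1 = k by omega, hcardC,
    Fintype.card_fin] at key
  push_cast [hle] at key
  set p : ℤ := 2 ^ k
  rw [show (2 : ℤ) ^ (2 * k + 2) = 4 * p ^ 2 by ring,
    show (2 : ℤ) ^ (3 * k + 4) = 16 * p ^ 3 by ring,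
    show (2 : ℤ) ^ (2 * k + 1) = 2 * p ^ 2 by ring] at key
  have hp : 1 ≤ p := one_le_pow₀ (by norm_num)
  nlinarith [pow_pos (by linarith : (0 : ℤ) < p) 3]
end

section
/- For every even integer m ≥ 2 there exists an additive subgroup G of the m × m matrices over ZMod 2 such that: G has exactly 2^(m/2) elements; every matrix B ∈ G is symplectic, i.e. symmetric (Bᵀ = B) with zero diagonal (B i i = 0 for all i); and every nonzero B ∈ G has full rank m (equivalently, is invertible over ZMod 2). -/
/-!
Multiplication by the elements of `GF(2^n)`, written in a basis over `ZMod 2`, gives an additive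
group of `2^n` matrices of size `n` whose nonzero members are invertible. Replacing each such `A`
by the block matrix `!![0, A; Aᵀ, 0]` makes it symmetric with zero diagonal and keeps it
invertible: the inverse is the block matrix built from `(A⁻¹)ᵀ`.
-/

open Matrix

namespace Matrix

variable {n o R : Type*}

def symmBlocks [AddCommMonoid R] : Matrix n n R →+ Matrix (n ⊕ n) (n ⊕ n) R where
  toFun A := fromBlocks 0 A Aᵀ 0
  map_zero' := by simp
  map_add' A B := by simp [fromBlocks_add]

section AddCommMonoid

variable [AddCommMonoid R]

theorem symmBlocks_apply (A : Matrix n n R) : symmBlocks A = fromBlocks 0 A Aᵀ 0 := rfl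

theorem symmBlocks_injective : Function.Injective (symmBlocks : Matrix n n R →+ _) :=
  fun _ _ h ↦ (fromBlocks_inj.mp h).2.1

theorem transpose_symmBlocks (A : Matrix n n R) : (symmBlocks A)ᵀ = symmBlocks A := by
  simp [symmBlocks_apply, fromBlocks_transpose]

theorem symmBlocks_apply_self (A : Matrix n n R) (i : n ⊕ n) : symmBlocks A i i = 0 := by
  cases i <;> rfl

end AddCommMonoid

theorem symmBlocks_mul_symmBlocks [CommSemiring R] [Fintype n] (A B : Matrix n n R) :
    symmBlocks A * symmBlocks B = fromBlocks (A * Bᵀ) 0 0 (Aᵀ * B) := by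
  simp [symmBlocks_apply, fromBlocks_multiply]

theorem isUnit_symmBlocks [CommSemiring R] [Fintype n] [DecidableEq n] {A : Matrix n n R}
    (hA : IsUnit A) : IsUnit (symmBlocks A) := by
  obtain ⟨u, rfl⟩ := hA
  refine ⟨⟨symmBlocks u, symmBlocks (↑u⁻¹ : Matrix n n R)ᵀ, ?_, ?_⟩, rfl⟩ <;>
    simp [symmBlocks_mul_symmBlocks, ← transpose_mul, fromBlocks_one]

theorem exists_addSubgroup_symm_hollow_of_forall_isUnit [CommRing R] [Fintype n]
    [DecidableEq n] [Fintype o] [DecidableEq o] {S : AddSubgroup (Matrix n n R)}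
    (hS : ∀ A ∈ S, A ≠ 0 → IsUnit A) (e : n ⊕ n ≃ o) :
    ∃ G : AddSubgroup (Matrix o o R), Nat.card G = Nat.card S ∧
      (∀ B ∈ G, Bᵀ = B ∧ ∀ i, B i i = 0) ∧ ∀ B ∈ G, B ≠ 0 → IsUnit B := by
  let φ : Matrix n n R →+ Matrix o o R :=
    (reindexAlgEquiv R R e).toAddEquiv.toAddMonoidHom.comp symmBlocks
  have hφ : ∀ A, φ A = reindex e e (symmBlocks A) := fun _ ↦ rfl
  refine ⟨S.map φ, AddSubgroup.card_map_of_injective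
    ((reindexAlgEquiv R R e).injective.comp symmBlocks_injective), ?_, ?_⟩
  · rintro _ ⟨A, -, rfl⟩
    refine ⟨by rw [hφ, transpose_reindex, transpose_symmBlocks], fun i ↦ ?_⟩
    rw [hφ, reindex_apply, submatrix_apply, symmBlocks_apply_self]
  · rintro _ ⟨A, hA, rfl⟩ hA0
    have hA0' : A ≠ 0 := by rintro rfl; exact hA0 (map_zero φ)
    exact (isUnit_symmBlocks (hS A hA hA0')).map (reindexAlgEquiv R R e)

end Matrix

theorem Module.Basis.exists_addSubgroup_card_eq_forall_isUnit {F K ι : Type*} [Field F]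
    [Field K] [Algebra F K] [Fintype ι] [DecidableEq ι] (b : Module.Basis ι F K) :
    ∃ S : AddSubgroup (Matrix ι ι F),
      Nat.card S = Nat.card K ∧ ∀ A ∈ S, A ≠ 0 → IsUnit A := by
  let L := (Algebra.leftMulMatrix b).toRingHom.toAddMonoidHom
  refine ⟨L.range, Nat.card_range_of_injective (Algebra.leftMulMatrix_injective b), ?_⟩
  rintro _ ⟨x, rfl⟩ hx
  have hx0 : x ≠ 0 := by rintro rfl; exact hx (map_zero L)
  exact (isUnit_iff_ne_zero.mpr hx0).map (Algebra.leftMulMatrix b)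

theorem exists_additive_group_of_full_rank_symplectic_matrices
    (m : ℕ) (hm : 2 ≤ m) (hme : Even m) :
    ∃ G : AddSubgroup (Matrix (Fin m) (Fin m) (ZMod 2)),
      Nat.card G = 2 ^ (m / 2) ∧
      (∀ B ∈ G, B.transpose = B ∧ ∀ i : Fin m, B i i = 0) ∧
      (∀ B ∈ G, B ≠ 0 → B.rank = m ∧ IsUnit B) := by
  obtain ⟨n, rfl⟩ := hme
  have hn : n ≠ 0 := by omega
  have : Fact (Nat.Prime 2) := ⟨Nat.prime_two⟩
  let b := (Module.finBasis (ZMod 2) (GaloisField 2 n)).reindex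
    (finCongr (GaloisField.finrank 2 hn))
  obtain ⟨S, hS_card, hS_unit⟩ := b.exists_addSubgroup_card_eq_forall_isUnit
  obtain ⟨G, hG_card, hG_symm, hG_unit⟩ :=
    exists_addSubgroup_symm_hollow_of_forall_isUnit hS_unit finSumFinEquiv
  refine ⟨G, ?_, hG_symm, fun B hB hB0 ↦ ⟨?_, hG_unit B hB hB0⟩⟩
  · rw [hG_card, hS_card, GaloisField.card 2 n hn]
    congr 1
    omega
  · rw [rank_of_isUnit B (hG_unit B hB hB0), Fintype.card_fin]
end
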